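/- arXiv:2301.04029 — 4 statements merged into one kernel-verified Lean document; each statement's English description precedes it below -/
import Mathlib

section
/- A bipartite graph with preferences has a unique stable matching if and only if the active graph Γ(M₀) of the I-optimal stable matching M₀ is a forest (contains no cycle). -/
/-- A finite bipartite graph with strict preference orders.
Vertices on one side have type `I` ("men"), on the other side `J` ("women").
Edges are pairs `(m, w) : I × J`; the edge set is `E`.
`pI m e f` means vertex `m ∈ I` strictly prefers edge `e` to edge `f`
(both incident to `m`); similarly `pJ` for the `J` side.
The axioms say that each `pI m` (resp. `pJ w`) is a strict linear order
on the set `δ(m)` (resp. `δ(w)`) of edges of `E` incident to the vertex. -/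
structure PrefSystem (I J : Type) where
  E : Finset (I × J)
  pI : I → (I × J) → (I × J) → Prop
  pJ : J → (I × J) → (I × J) → Prop
  pI_irrefl : ∀ m e, ¬ pI m e e
  pI_trans : ∀ m e f g, pI m e f → pI m f g → pI m e g
  pI_total : ∀ m e f, e ∈ E → f ∈ E → e.1 = m → f.1 = m → e ≠ f → pI m e f ∨ pI m f e
  pJ_irrefl : ∀ w e, ¬ pJ w e e
  pJ_trans : ∀ w e f g, pJ w e f → pJ w f g → pJ w e g
  pJ_total : ∀ w e f, e ∈ E → f ∈ E → e.2 = w → f.2 = w → e ≠ f → pJ w e f ∨ pJ w f e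

variable {I J : Type}

/-- `M` is a matching: a set of edges of `G`, no two of which share a vertex. -/
def IsMatching (G : PrefSystem I J) (M : Finset (I × J)) : Prop :=
  M ⊆ G.E ∧ ∀ e ∈ M, ∀ f ∈ M, e ≠ f → e.1 ≠ f.1 ∧ e.2 ≠ f.2

/-- The edge `e ∈ E \ M` blocks `M` if, for each endpoint `v` of `e`,
either `v` is uncovered by `M` or `v` strictly prefers `e` to its `M`-edge. -/
def Blocks (G : PrefSystem I J) (M : Finset (I × J)) (e : I × J) : Prop :=
  e ∈ G.E ∧ e ∉ M ∧ (∀ f ∈ M, f.1 = e.1 → G.pI e.1 e f) ∧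
    (∀ f ∈ M, f.2 = e.2 → G.pJ e.2 e f)

/-- A stable matching: a matching with no blocking edge. -/
def IsStable (G : PrefSystem I J) (M : Finset (I × J)) : Prop :=
  IsMatching G M ∧ ∀ e, ¬ Blocks G M e

/-- `M ≼ L`: every covered vertex in `I` weakly prefers its `M`-edge to its `L`-edge. -/
def Preceq (G : PrefSystem I J) (M L : Finset (I × J)) : Prop :=
  ∀ e ∈ M, ∀ f ∈ L, e.1 = f.1 → e = f ∨ G.pI e.1 e f

/-- `a = mw ∉ M` is admissible for `M`: `M` has an edge at `m` preferred to `a`,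
and either `w` is uncovered by `M` or `a` is preferred by `w` to its `M`-edge. -/
def Admissible (G : PrefSystem I J) (M : Finset (I × J)) (a : I × J) : Prop :=
  a ∈ G.E ∧ a ∉ M ∧ (∃ e ∈ M, e.1 = a.1 ∧ G.pI a.1 e a) ∧
    (∀ e ∈ M, e.2 = a.2 → G.pJ a.2 a e)

/-- `a` is the active edge at the vertex `a.1 ∈ I`: the most preferred
admissible edge incident to `a.1`. -/
def ActiveEdge (G : PrefSystem I J) (M : Finset (I × J)) (a : I × J) : Prop :=
  Admissible G M a ∧ ∀ b, Admissible G M b → b.1 = a.1 → b = a ∨ G.pI a.1 a b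

/-- `e` is an edge of the active graph `Γ(M)`: a matching edge or an active edge. -/
def InGamma (G : PrefSystem I J) (M : Finset (I × J)) (e : I × J) : Prop :=
  e ∈ M ∨ ActiveEdge G M e

/-- A rotation for `M`: a (simple, alternating) cycle of the active graph `Γ(M)`,
given as a cyclic sequence `c` of `k ≥ 2` distinct edges of `Γ(M)`, consecutive
edges sharing a vertex, alternating between `M`-edges and active edges, and such
that non-consecutive edges share no vertex. -/
def IsRotation (G : PrefSystem I J) (M : Finset (I × J))
    (k : ℕ) (c : ZMod k → I × J) : Prop :=
  2 ≤ k ∧ Function.Injective c ∧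
  (∀ i, InGamma G M (c i)) ∧
  (∀ i, (c i).1 = (c (i + 1)).1 ∨ (c i).2 = (c (i + 1)).2) ∧
  (∀ i, c i ∈ M ↔ c (i + 1) ∉ M) ∧
  (∀ i j : ZMod k, i ≠ j → ((c i).1 = (c j).1 ∨ (c i).2 = (c j).2) →
    j = i + 1 ∨ i = j + 1)

/-- The active graph `Γ(M)` as a simple graph on the vertex set `I ⊕ J`. -/
def gammaSG (G : PrefSystem I J) (M : Finset (I × J)) : SimpleGraph (I ⊕ J) where
  Adj u v := match u, v with
    | Sum.inl m, Sum.inr w => InGamma G M (m, w)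
    | Sum.inr w, Sum.inl m => InGamma G M (m, w)
    | _, _ => False
  symm := ⟨by rintro (m | w) (m' | w') h <;> simp_all⟩
  loopless := ⟨by rintro (m | w) h <;> simp_all⟩

/-!
If `Γ(M₀)` has a cycle, then at each of its vertices the cycle uses exactly the `M₀`-edge and one
active edge (at a woman this needs a count: the cycle has as many men as women, and its
`M₀`-edges already reach every man). Exchanging the two kinds of edges along the cycle yields a
second stable matching.

Conversely, let `L ≠ M₀` be stable. Both matchings cover the same vertices (rural hospitals), and
for a man whose partners in `M₀` and `L` differ, the woman of his active edge is matched in `M₀`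
to another such man. Iterating this map on the finitely many such men gives a periodic orbit,
which closes up to a cycle of `Γ(M₀)`.
-/

open Finset SimpleGraph Function

lemma Finset.card_eq_mul_card_image_of_card_fiber {α β : Type*} [DecidableEq β] {s : Finset α}
    (f : α → β) {n : ℕ} (h : ∀ a ∈ s, #{x ∈ s | f x = f a} = n) : #s = n * #(s.image f) := by
  have hfib : ∀ b ∈ s.image f, #{x ∈ s | f x = b} = n := by
    simp only [mem_image, forall_exists_index, and_imp]
    rintro _ a ha rfl
    exact h a ha
  exact le_antisymm (card_le_mul_card_image s n fun b hb => (hfib b hb).le)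
    (mul_card_image_le_card s n fun b hb => (hfib b hb).ge)

lemma Finset.exists_eq_pair_of_card_eq_two {α : Type*} [DecidableEq α] {s : Finset α}
    {P : α → Prop} (hs : #s = 2) (hP : ∃ x ∈ s, P x) (hnP : ∃ y ∈ s, ¬P y) :
    ∃ x, P x ∧ ∃ y, ¬P y ∧ ∀ z, z ∈ s ↔ z = x ∨ z = y := by
  obtain ⟨x, hx, hPx⟩ := hP
  obtain ⟨y, hy, hPy⟩ := hnP
  have hxy : x ≠ y := fun h => hPy (h ▸ hPx)
  have hsub : {x, y} ⊆ s := insert_subset hx (singleton_subset_iff.2 hy)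
  have heq := eq_of_subset_of_card_le hsub (by rw [hs, card_pair hxy])
  exact ⟨x, hPx, y, hPy, fun z => by rw [← heq, mem_insert, mem_singleton]⟩

lemma Function.exists_mem_periodicPts {α : Type*} [Finite α] [Nonempty α] (f : α → α) :
    ∃ x, x ∈ periodicPts f := by
  obtain ⟨a, b, hab, h⟩ :=
    Finite.exists_ne_map_eq_of_infinite fun n : ℕ => f^[n] (Classical.arbitrary α)
  wlog hlt : a < b generalizing a b
  · exact this b a (Ne.symm hab) h.symm (by omega)
  refine ⟨f^[a] (Classical.arbitrary α), mk_mem_periodicPts (n := b - a) (by omega) ?_⟩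
  rw [IsPeriodicPt, IsFixedPt, ← iterate_add_apply, Nat.sub_add_cancel hlt.le]
  exact h.symm

lemma SimpleGraph.reachable_of_forall_reachable_succ {V : Type*} {H : SimpleGraph V}
    (g : ℕ → V) {n : ℕ} (h : ∀ k < n, H.Reachable (g k) (g (k + 1))) :
    H.Reachable (g 0) (g n) := by
  induction n with
  | zero => rfl
  | succ n ih => exact (ih fun k hk => h k (by omega)).trans (h n (by omega))

instance PrefSystem.isStrictOrder_pI (G : PrefSystem I J) (m : I) :
    IsStrictOrder (I × J) (G.pI m) where
  irrefl := G.pI_irrefl m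
  trans := G.pI_trans m

section

variable {G : PrefSystem I J} {M : Finset (I × J)} {e f : I × J}

lemma IsMatching.eq_of_fst_eq (hM : IsMatching G M) (he : e ∈ M) (hf : f ∈ M)
    (h : e.1 = f.1) : e = f :=
  by_contra fun hne => (hM.2 e he f hf hne).1 h

lemma IsMatching.eq_of_snd_eq (hM : IsMatching G M) (he : e ∈ M) (hf : f ∈ M)
    (h : e.2 = f.2) : e = f :=
  by_contra fun hne => (hM.2 e he f hf hne).2 h

lemma IsMatching.card_image_fst [DecidableEq I] (hM : IsMatching G M) : #(M.image Prod.fst) = #M :=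
  card_image_of_injOn fun _ he _ hf => hM.eq_of_fst_eq he hf

lemma IsMatching.card_image_snd [DecidableEq J] (hM : IsMatching G M) : #(M.image Prod.snd) = #M :=
  card_image_of_injOn fun _ he _ hf => hM.eq_of_snd_eq he hf

lemma ActiveEdge.eq_of_fst_eq (he : ActiveEdge G M e) (hf : ActiveEdge G M f)
    (h : e.1 = f.1) : e = f := by
  rcases he.2 f hf.1 h.symm with h' | h'
  · exact h'.symm
  rcases hf.2 e he.1 h with h'' | h''
  · exact h''
  exact absurd (G.pI_trans _ _ _ _ h' (h ▸ h'')) (G.pI_irrefl _ _)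

lemma InGamma.mem_E (hM : IsMatching G M) (he : InGamma G M e) : e ∈ G.E :=
  he.elim (fun h => hM.1 h) fun h => h.1.1

lemma Admissible.exists_activeEdge (hf : Admissible G M f) :
    ∃ a, ActiveEdge G M a ∧ a.1 = f.1 := by
  classical
  -- `b < a` means `b` is preferred to `a`, so a minimal element is a most preferred one.
  let := partialOrderOfSO (G.pI f.1)
  obtain ⟨a, ha⟩ := (G.E.filter fun b => Admissible G M b ∧ b.1 = f.1).exists_minimal
    ⟨f, mem_filter.2 ⟨hf.1, hf, rfl⟩⟩
  obtain ⟨-, haAdm, ha1⟩ := mem_filter.1 ha.prop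
  refine ⟨a, ⟨haAdm, fun b hb hb1 => ?_⟩, ha1⟩
  by_contra! hab
  have hba : G.pI f.1 b a := by
    rw [ha1] at hab
    exact (G.pI_total _ _ _ hb.1 haAdm.1 (hb1.trans ha1) ha1 hab.1).resolve_right hab.2
  exact ha.not_lt (mem_filter.2 ⟨hb.1, hb, hb1.trans ha1⟩) hba

end

lemma IsMatching.exists_mem_snd_eq_of_card_image_eq [DecidableEq I] [DecidableEq J]
    {G : PrefSystem I J} {M C : Finset (I × J)} (hM : IsMatching G M)
    (hfst : ∀ c ∈ C, ∃ e ∈ C, e ∈ M ∧ e.1 = c.1)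
    (hcard : #(C.image Prod.fst) = #(C.image Prod.snd)) {c : I × J} (hc : c ∈ C) :
    ∃ e ∈ C, e ∈ M ∧ e.2 = c.2 := by
  set CM := C.filter (· ∈ M)
  have himage : CM.image Prod.fst = C.image Prod.fst := by
    refine (image_subset_image (filter_subset _ _)).antisymm fun m hm => ?_
    obtain ⟨c, hc, rfl⟩ := mem_image.1 hm
    obtain ⟨e, heC, heM, he1⟩ := hfst c hc
    exact mem_image.2 ⟨e, mem_filter.2 ⟨heC, heM⟩, he1⟩
  have hcard_fst : #(CM.image Prod.fst) = #CM :=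
    card_image_of_injOn fun x hx y hy => hM.eq_of_fst_eq (mem_filter.1 hx).2 (mem_filter.1 hy).2
  have hcard_snd : #(CM.image Prod.snd) = #CM :=
    card_image_of_injOn fun x hx y hy => hM.eq_of_snd_eq (mem_filter.1 hx).2 (mem_filter.1 hy).2
  have himage' : CM.image Prod.snd = C.image Prod.snd :=
    eq_of_subset_of_card_le (image_subset_image (filter_subset _ _)) (by
      rw [himage] at hcard_fst; omega)
  obtain ⟨e, he, he2⟩ := mem_image.1 (himage' ▸ mem_image_of_mem Prod.snd hc)
  exact ⟨e, (mem_filter.1 he).1, (mem_filter.1 he).2, he2⟩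

section

variable {G : PrefSystem I J} {M₀ L : Finset (I × J)}

lemma Preceq.pI_of_ne (hpre : Preceq G M₀ L) {e f : I × J} (he : e ∈ M₀) (hf : f ∈ L)
    (h : e.1 = f.1) (hne : e ≠ f) : G.pI e.1 e f :=
  (hpre e he f hf h).resolve_left hne

lemma Preceq.pJ_of_ne (hM₀ : IsMatching G M₀) (hL : IsStable G L)
    (hpre : Preceq G M₀ L) {f g : I × J} (hf : f ∈ L) (hg : g ∈ M₀) (h : f.2 = g.2)
    (hne : f ≠ g) : G.pJ f.2 f g := by
  by_contra hfg
  have hgf : G.pJ f.2 g f :=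
    (G.pJ_total _ _ _ (hL.1.1 hf) (hM₀.1 hg) rfl h.symm hne).resolve_left hfg
  have hgL : g ∉ L := fun hgL => hne (hL.1.eq_of_snd_eq hf hgL h)
  refine hL.2 g ⟨hM₀.1 hg, hgL, fun h' hh' hh1 => ?_, fun h' hh' hh2 => ?_⟩
  · exact hpre.pI_of_ne hg hh' hh1.symm fun hgh => hgL (hgh ▸ hh')
  · rw [hL.1.eq_of_snd_eq hh' hf (hh2.trans h.symm), ← h]
    exact hgf

lemma Preceq.exists_fst_eq_of_mem_right (h₀ : IsStable G M₀) (hL : IsStable G L)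
    (hpre : Preceq G M₀ L) {f : I × J} (hf : f ∈ L) : ∃ e ∈ M₀, e.1 = f.1 := by
  by_contra! hno
  have hfM : f ∉ M₀ := fun hfM => hno f hfM rfl
  refine h₀.2 f ⟨hL.1.1 hf, hfM, fun g hg hg1 => absurd hg1 (hno g hg), fun g hg hg2 => ?_⟩
  exact hpre.pJ_of_ne h₀.1 hL hf hg hg2.symm fun hfg => hfM (hfg ▸ hg)

lemma Preceq.exists_snd_eq_of_mem_left (hM₀ : IsMatching G M₀) (hL : IsStable G L)
    (hpre : Preceq G M₀ L) {e : I × J} (he : e ∈ M₀) : ∃ f ∈ L, f.2 = e.2 := by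
  by_contra! hno
  have heL : e ∉ L := fun heL => hno e heL rfl
  refine hL.2 e ⟨hM₀.1 he, heL, fun g hg hg1 => ?_, fun g hg hg2 => absurd hg2 (hno g hg)⟩
  exact hpre.pI_of_ne he hg hg1.symm fun heg => heL (heg ▸ hg)

/-- Rural hospitals theorem: both inclusions are equalities because `#L ≤ #M₀ ≤ #L`. -/
lemma Preceq.image_eq [DecidableEq I] [DecidableEq J] (h₀ : IsStable G M₀) (hL : IsStable G L)
    (hpre : Preceq G M₀ L) :
    L.image Prod.fst = M₀.image Prod.fst ∧ M₀.image Prod.snd = L.image Prod.snd := by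
  have hfst : L.image Prod.fst ⊆ M₀.image Prod.fst := by
    simp only [subset_iff, mem_image, forall_exists_index, and_imp]
    rintro _ f hf rfl
    exact hpre.exists_fst_eq_of_mem_right h₀ hL hf
  have hsnd : M₀.image Prod.snd ⊆ L.image Prod.snd := by
    simp only [subset_iff, mem_image, forall_exists_index, and_imp]
    rintro _ e he rfl
    exact hpre.exists_snd_eq_of_mem_left h₀.1 hL he
  have hLM : #L ≤ #M₀ := by
    simpa only [h₀.1.card_image_fst, hL.1.card_image_fst] using card_le_card hfst
  have hML : #M₀ ≤ #L := by
    simpa only [h₀.1.card_image_snd, hL.1.card_image_snd] using card_le_card hsnd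
  refine ⟨eq_of_subset_of_card_le hfst ?_, eq_of_subset_of_card_le hsnd ?_⟩
  · rwa [h₀.1.card_image_fst, hL.1.card_image_fst]
  · rwa [h₀.1.card_image_snd, hL.1.card_image_snd]

lemma Preceq.exists_snd_eq_of_mem_right (h₀ : IsStable G M₀) (hL : IsStable G L)
    (hpre : Preceq G M₀ L) {f : I × J} (hf : f ∈ L) : ∃ e ∈ M₀, e.2 = f.2 := by
  classical
  have hw := mem_image_of_mem Prod.snd hf
  rwa [← (hpre.image_eq h₀ hL).2, mem_image] at hw

lemma Preceq.exists_fst_eq_of_mem_left (h₀ : IsStable G M₀) (hL : IsStable G L)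
    (hpre : Preceq G M₀ L) {e : I × J} (he : e ∈ M₀) : ∃ f ∈ L, f.1 = e.1 := by
  classical
  have hm := mem_image_of_mem Prod.fst he
  rwa [← (hpre.image_eq h₀ hL).1, mem_image] at hm

lemma Preceq.admissible (h₀ : IsStable G M₀) (hL : IsStable G L) (hpre : Preceq G M₀ L)
    {e f : I × J} (he : e ∈ M₀) (hf : f ∈ L) (h : f.1 = e.1) (hne : f ≠ e) :
    Admissible G M₀ f := by
  have hfM : f ∉ M₀ := fun hfM => hne (h₀.1.eq_of_fst_eq hfM he h)
  refine ⟨hL.1.1 hf, hfM, ⟨e, he, h.symm, h ▸ hpre.pI_of_ne he hf h.symm hne.symm⟩,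
    fun g hg hg2 => ?_⟩
  exact hpre.pJ_of_ne h₀.1 hL hf hg hg2.symm fun hfg => hfM (hfg ▸ hg)

lemma Preceq.exists_activeEdge_of_ne (h₀ : IsStable G M₀) (hL : IsStable G L)
    (hpre : Preceq G M₀ L) {e f : I × J} (he : e ∈ M₀) (hf : f ∈ L) (h : f.1 = e.1)
    (hne : f ≠ e) : ∃ a, ActiveEdge G M₀ a ∧ a.1 = e.1 ∧
      ∃ e' ∈ M₀, e'.2 = a.2 ∧ ∃ f' ∈ L, f'.1 = e'.1 ∧ f' ≠ e' := by
  have hadm := hpre.admissible h₀ hL he hf h hne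
  obtain ⟨a, hact, ha1⟩ := hadm.exists_activeEdge
  have hman : a ∉ L → ∀ g ∈ L, g.1 = a.1 → G.pI a.1 a g := by
    intro haL g hg hg1
    obtain rfl := hL.1.eq_of_fst_eq hg hf (hg1.trans ha1)
    exact (hact.2 g hadm ha1.symm).resolve_left fun hga => haL (hga ▸ hg)
  have hcov : ∃ g ∈ L, g.2 = a.2 := by
    by_contra! hno
    have haL : a ∉ L := fun haL => hno a haL rfl
    exact hL.2 a ⟨hact.1.1, haL, hman haL, fun g hg hg2 => absurd hg2 (hno g hg)⟩
  obtain ⟨g, hg, hg2⟩ := hcov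
  obtain ⟨e', he', he'2⟩ := hpre.exists_snd_eq_of_mem_right h₀ hL hg
  have he'L : e' ∉ L := by
    intro he'L
    have haL : a ∉ L := fun haL =>
      hact.1.2.1 (hL.1.eq_of_snd_eq haL he'L (he'2.trans hg2).symm ▸ he')
    refine hL.2 a ⟨hact.1.1, haL, hman haL, fun h' hh' hh'2 => ?_⟩
    rw [hL.1.eq_of_snd_eq hh' he'L (hh'2.trans (he'2.trans hg2).symm)]
    exact hact.1.2.2.2 e' he' (he'2.trans hg2)
  obtain ⟨f', hf', hf'1⟩ := hpre.exists_fst_eq_of_mem_left h₀ hL he'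
  exact ⟨a, hact, ha1.trans h, e', he', he'2.trans hg2, f', hf', hf'1,
    fun hfe => he'L (hfe ▸ hf')⟩

end
lemma gammaSG_adj_inl_inr {G : PrefSystem I J} {M : Finset (I × J)} {m : I} {w : J} :
    (gammaSG G M).Adj (.inl m) (.inr w) ↔ InGamma G M (m, w) := Iff.rfl

lemma Sym2.inl_inr_eq_iff {α β : Type*} {a a' : α} {b b' : β} :
    s((.inl a : α ⊕ β), .inr b) = s(.inl a', .inr b') ↔ a = a' ∧ b = b' := by
  simp

/-- Take a periodic point `z` of `e ↦ e'`. Going around its orbit leads from the woman of the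
active edge at `z` back to `z` without using that edge, so that edge is not a bridge. -/
theorem not_isAcyclic_gammaSG_of_forall_exists {G : PrefSystem I J} {M : Finset (I × J)}
    (hM : IsMatching G M) {D : Set (I × J)} (hDM : D ⊆ M) (hne : D.Nonempty)
    (hstep : ∀ e ∈ D, ∃ a, ActiveEdge G M a ∧ a.1 = e.1 ∧ ∃ e' ∈ D, e'.2 = a.2) :
    ¬ (gammaSG G M).IsAcyclic := by
  have := (M.finite_toSet.subset hDM).to_subtype
  have := hne.to_subtype
  have hstep' : ∀ x : D, ∃ a, ActiveEdge G M a ∧ a.1 = x.1.1 ∧ ∃ y : D, y.1.2 = a.2 :=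
    fun ⟨e, he⟩ => by
      obtain ⟨a, hact, ha1, e', he', he'2⟩ := hstep e he
      exact ⟨a, hact, ha1, ⟨e', he'⟩, he'2⟩
  choose act hact hact1 next hnext2 using hstep'
  obtain ⟨z, hz⟩ := exists_mem_periodicPts next
  have hadj : ∀ x, (gammaSG G M).Adj (.inl x.1.1) (.inr (act x).2) := fun x => by
    rw [gammaSG_adj_inl_inr, ← hact1]
    exact .inr (hact x)
  intro hacyc
  apply isBridge_iff.1 (isAcyclic_iff_forall_adj_isBridge.1 hacyc (hadj z))
  let H := (gammaSG G M).deleteEdges {s(.inl z.1.1, .inr (act z).2)}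
  have hmatched : ∀ x, H.Adj (.inr (act x).2) (.inl (next x).1.1) := by
    intro x
    have hmem : ((next x).1.1, (act x).2) ∈ M := hnext2 x ▸ hDM (next x).2
    refine deleteEdges_adj.2 ⟨(gammaSG_adj_inl_inr.2 (.inl hmem)).symm, fun h => ?_⟩
    rw [Set.mem_singleton_iff, Sym2.eq_swap, Sym2.inl_inr_eq_iff] at h
    have hz : act z = ((next x).1.1, (act x).2) := Prod.ext (h.1 ▸ hact1 z) h.2.symm
    exact (hact z).1.2.1 (hz ▸ hmem)
  have hactive : ∀ x, x ≠ z → H.Adj (.inl x.1.1) (.inr (act x).2) := by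
    refine fun x hxz => deleteEdges_adj.2 ⟨hadj x, fun h => hxz ?_⟩
    rw [Set.mem_singleton_iff, Sym2.inl_inr_eq_iff] at h
    exact Subtype.ext (hM.eq_of_fst_eq (hDM x.2) (hDM z.2) h.1)
  have hn : 0 < minimalPeriod next z := minimalPeriod_pos_of_mem_periodicPts hz
  have horbit := reachable_of_forall_reachable_succ (H := H) (n := minimalPeriod next z - 1)
    (fun k => .inl (next^[k] (next z)).1.1) fun k hk => by
      have hkz : next^[k] (next z) ≠ z := by
        rw [← iterate_succ_apply]
        exact not_isPeriodicPt_of_pos_of_lt_minimalPeriod k.succ_ne_zero (by omega)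
      rw [iterate_succ_apply']
      exact (hactive _ hkz).reachable.trans (hmatched _).reachable
  rw [iterate_zero_apply, ← iterate_succ_apply, Nat.succ_eq_add_one, Nat.sub_add_cancel hn,
    iterate_minimalPeriod] at horbit
  exact ((hmatched z).reachable.trans horbit).symm

theorem Preceq.not_isAcyclic_gammaSG {G : PrefSystem I J} {M₀ L : Finset (I × J)}
    (h₀ : IsStable G M₀) (hL : IsStable G L) (hpre : Preceq G M₀ L) (hne : L ≠ M₀) :
    ¬ (gammaSG G M₀).IsAcyclic := by
  refine not_isAcyclic_gammaSG_of_forall_exists h₀.1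
    (D := {e | e ∈ M₀ ∧ ∃ f ∈ L, f.1 = e.1 ∧ f ≠ e}) (fun _ he => he.1) ?_ ?_
  · obtain ⟨x, hx⟩ : ∃ x, ¬(x ∈ L ↔ x ∈ M₀) := by
      by_contra! h
      exact hne (Finset.ext h)
    by_cases hxL : x ∈ L
    · obtain ⟨e, he, he1⟩ := hpre.exists_fst_eq_of_mem_right h₀ hL hxL
      exact ⟨e, he, x, hxL, he1.symm, fun hxe => hx (by simp [hxL, hxe ▸ he])⟩
    · have hxM : x ∈ M₀ := by tauto
      obtain ⟨f, hf, hf1⟩ := hpre.exists_fst_eq_of_mem_left h₀ hL hxM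
      exact ⟨x, hxM, f, hf, hf1, fun hfx => hxL (hfx ▸ hf)⟩
  · rintro e ⟨he, f, hf, hf1, hfe⟩
    obtain ⟨a, hact, ha1, e', he', he'2, f', hf', hf'1, hf'e'⟩ :=
      hpre.exists_activeEdge_of_ne h₀ hL he hf hf1 hfe
    exact ⟨a, hact, ha1, e', ⟨he', f', hf', hf'1, hf'e'⟩, he'2⟩

section

variable {G : PrefSystem I J} {M C : Finset (I × J)}

/-- The edge set of a rotation of `M` (an alternating cycle of `Γ(M)`), described vertex by
vertex. -/
structure IsRotationSet (G : PrefSystem I J) (M C : Finset (I × J)) : Prop where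
  inGamma : ∀ c ∈ C, InGamma G M c
  fiber_fst : ∀ c ∈ C, ∃ e ∈ M, ∃ a ∉ M, ∀ x, x ∈ C ∧ x.1 = c.1 ↔ x = e ∨ x = a
  fiber_snd : ∀ c ∈ C, ∃ e ∈ M, ∃ a ∉ M, ∀ x, x ∈ C ∧ x.2 = c.2 ↔ x = e ∨ x = a

namespace IsRotationSet

variable [DecidableEq (I × J)]

lemma eq_of_fst_eq (hC : IsRotationSet G M C) (hM : IsMatching G M) {c f g : I × J}
    (hc : c ∈ C) (hf : f ∈ symmDiff M C) (hg : g ∈ symmDiff M C) (hf1 : f.1 = c.1)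
    (hg1 : g.1 = c.1) : f = g := by
  obtain ⟨e, heM, a, -, hfib⟩ := hC.fiber_fst c hc
  obtain ⟨heC, he1⟩ := (hfib e).2 (.inl rfl)
  have key : ∀ x ∈ symmDiff M C, x.1 = c.1 → x = a := by
    intro x hx hx1
    rcases mem_symmDiff.1 hx with ⟨hxM, hxC⟩ | ⟨hxC, hxM⟩
    · exact absurd (hM.eq_of_fst_eq hxM heM (hx1.trans he1.symm) ▸ heC) hxC
    · exact ((hfib x).1 ⟨hxC, hx1⟩).resolve_left fun hxe => hxM (hxe ▸ heM)
  exact (key f hf hf1).trans (key g hg hg1).symm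

lemma eq_of_snd_eq (hC : IsRotationSet G M C) (hM : IsMatching G M) {c f g : I × J}
    (hc : c ∈ C) (hf : f ∈ symmDiff M C) (hg : g ∈ symmDiff M C) (hf2 : f.2 = c.2)
    (hg2 : g.2 = c.2) : f = g := by
  obtain ⟨e, heM, a, -, hfib⟩ := hC.fiber_snd c hc
  obtain ⟨heC, he2⟩ := (hfib e).2 (.inl rfl)
  have key : ∀ x ∈ symmDiff M C, x.2 = c.2 → x = a := by
    intro x hx hx2
    rcases mem_symmDiff.1 hx with ⟨hxM, hxC⟩ | ⟨hxC, hxM⟩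
    · exact absurd (hM.eq_of_snd_eq hxM heM (hx2.trans he2.symm) ▸ heC) hxC
    · exact ((hfib x).1 ⟨hxC, hx2⟩).resolve_left fun hxe => hxM (hxe ▸ heM)
  exact (key f hf hf2).trans (key g hg hg2).symm

lemma isMatching_symmDiff (hC : IsRotationSet G M C) (hM : IsMatching G M) :
    IsMatching G (symmDiff M C) := by
  have hmem : ∀ f ∈ symmDiff M C, f ∉ C → f ∈ M := fun f hf hfC =>
    ((mem_symmDiff.1 hf).resolve_right fun h => hfC h.1).1
  refine ⟨fun f hf => ?_, fun f hf g hg hfg => ⟨fun h1 => hfg ?_, fun h2 => hfg ?_⟩⟩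
  · rcases mem_symmDiff.1 hf with ⟨hfM, -⟩ | ⟨hfC, -⟩
    exacts [hM.1 hfM, (hC.inGamma f hfC).mem_E hM]
  · by_cases hfC : f ∈ C
    · exact hC.eq_of_fst_eq hM hfC hf hg rfl h1.symm
    by_cases hgC : g ∈ C
    · exact hC.eq_of_fst_eq hM hgC hf hg h1 rfl
    exact hM.eq_of_fst_eq (hmem f hf hfC) (hmem g hg hgC) h1
  · by_cases hfC : f ∈ C
    · exact hC.eq_of_snd_eq hM hfC hf hg rfl h2.symm
    by_cases hgC : g ∈ C
    · exact hC.eq_of_snd_eq hM hgC hf hg h2 rfl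
    exact hM.eq_of_snd_eq (hmem f hf hfC) (hmem g hg hgC) h2

/-- The woman of a blocking edge `e` of `M ∆ C` prefers `e` to her `M`-partner, so `e ∉ M`; as
`e` does not block `M`, it is admissible for `M`, and then its man prefers his active edge to
`e`. -/
theorem isStable_symmDiff (hC : IsRotationSet G M C) (h₀ : IsStable G M) :
    IsStable G (symmDiff M C) := by
  refine ⟨hC.isMatching_symmDiff h₀.1, fun e ⟨heE, heM', hbI, hbJ⟩ => ?_⟩
  have hold : ∀ g ∈ M, g ∉ C → g ∈ symmDiff M C := fun g hg hgC =>
    mem_symmDiff.2 (.inl ⟨hg, hgC⟩)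
  have hnew : ∀ a ∈ C, a ∉ M → a ∈ symmDiff M C := fun a haC haM =>
    mem_symmDiff.2 (.inr ⟨haC, haM⟩)
  have hwoman : ∀ g ∈ M, g.2 = e.2 → G.pJ e.2 e g := by
    intro g hg hg2
    by_cases hgC : g ∈ C
    · obtain ⟨_, -, a, haM, hfib⟩ := hC.fiber_snd g hgC
      obtain ⟨haC, ha2⟩ := (hfib a).2 (.inr rfl)
      have hact : ActiveEdge G M a := (hC.inGamma a haC).resolve_left haM
      have hag : G.pJ a.2 a g := hact.1.2.2.2 g hg (hg2.trans (ha2.trans hg2).symm)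
      rw [ha2.trans hg2] at hag
      exact G.pJ_trans _ _ _ _ (hbJ a (hnew a haC haM) (ha2.trans hg2)) hag
    · exact hbJ g (hold g hg hgC) hg2
  have heM : e ∉ M := fun heM => G.pJ_irrefl _ _ (hwoman e heM rfl)
  obtain ⟨g, hg, hg1, hge⟩ : ∃ g ∈ M, g.1 = e.1 ∧ G.pI e.1 g e := by
    by_contra! h
    refine h₀.2 e ⟨heE, heM, fun g hg hg1 => ?_, hwoman⟩
    have hge : g ≠ e := fun hge => heM (hge ▸ hg)
    exact (G.pI_total _ _ _ (h₀.1.1 hg) heE hg1 rfl hge).resolve_left (h g hg hg1)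
  by_cases hgC : g ∈ C
  · have hadm : Admissible G M e := ⟨heE, heM, ⟨g, hg, hg1, hge⟩, hwoman⟩
    obtain ⟨_, -, a, haM, hfib⟩ := hC.fiber_fst g hgC
    obtain ⟨haC, ha1⟩ := (hfib a).2 (.inr rfl)
    have hact : ActiveEdge G M a := (hC.inGamma a haC).resolve_left haM
    have hea := hbI a (hnew a haC haM) (ha1.trans hg1)
    rcases hact.2 e hadm (ha1.trans hg1).symm with rfl | hae
    · exact G.pI_irrefl _ _ hea
    · rw [ha1.trans hg1] at hae
      exact G.pI_irrefl _ _ (G.pI_trans _ _ _ _ hea hae)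
  · exact G.pI_irrefl _ _ (G.pI_trans _ _ _ _ (hbI g (hold g hg hgC) hg1) hge)

end IsRotationSet

end

section

variable {G : PrefSystem I J} {M C : Finset (I × J)} {u : I ⊕ J} {p : (gammaSG G M).Walk u u}

lemma card_filter_fst_eq_two_of_isCycle [DecidableEq I] (hp : p.IsCycle)
    (hC : ∀ e, e ∈ C ↔ p.toSubgraph.Adj (.inl e.1) (.inr e.2)) {c : I × J} (hc : c ∈ C) :
    #{x ∈ C | x.1 = c.1} = 2 := by
  have hv : .inl c.1 ∈ p.support := p.mem_verts_toSubgraph.1 ((hC c).1 hc).fst_mem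
  have hinj : Set.InjOn (fun x : I × J => (.inr x.2 : I ⊕ J))
      (({x ∈ C | x.1 = c.1} : Finset (I × J)) : Set (I × J)) := by
    intro x hx y hy hxy
    simp only [mem_coe, mem_filter] at hx hy
    exact Prod.ext (hx.2.trans hy.2.symm) (Sum.inr.inj hxy)
  rw [← hp.ncard_neighborSet_toSubgraph_eq_two hv, ← Set.ncard_coe_finset, ← hinj.ncard_image]
  congr 1
  ext (m | w)
  · simp only [coe_filter, Set.mem_image, Set.mem_ofPred_eq, reduceCtorEq, and_false,
      exists_false, Subgraph.mem_neighborSet, false_iff]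
    exact fun h => h.adj_sub
  · simp only [coe_filter, Set.mem_image, Set.mem_ofPred_eq, Sum.inr.injEq,
      Subgraph.mem_neighborSet]
    constructor
    · rintro ⟨x, ⟨hxC, hx1⟩, rfl⟩
      exact hx1 ▸ (hC x).1 hxC
    · exact fun h => ⟨(c.1, w), ⟨(hC _).2 h, rfl⟩, rfl⟩

lemma card_filter_snd_eq_two_of_isCycle [DecidableEq J] (hp : p.IsCycle)
    (hC : ∀ e, e ∈ C ↔ p.toSubgraph.Adj (.inl e.1) (.inr e.2)) {c : I × J} (hc : c ∈ C) :
    #{x ∈ C | x.2 = c.2} = 2 := by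
  have hv : .inr c.2 ∈ p.support := p.mem_verts_toSubgraph.1 ((hC c).1 hc).snd_mem
  have hinj : Set.InjOn (fun x : I × J => (.inl x.1 : I ⊕ J))
      (({x ∈ C | x.2 = c.2} : Finset (I × J)) : Set (I × J)) := by
    intro x hx y hy hxy
    simp only [mem_coe, mem_filter] at hx hy
    exact Prod.ext (Sum.inl.inj hxy) (hx.2.trans hy.2.symm)
  rw [← hp.ncard_neighborSet_toSubgraph_eq_two hv, ← Set.ncard_coe_finset, ← hinj.ncard_image]
  congr 1
  ext (m | w)
  · simp only [coe_filter, Set.mem_image, Set.mem_ofPred_eq, Sum.inl.injEq,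
      Subgraph.mem_neighborSet]
    constructor
    · rintro ⟨x, ⟨hxC, hx2⟩, rfl⟩
      exact hx2 ▸ ((hC x).1 hxC).symm
    · exact fun h => ⟨(m, c.2), ⟨(hC _).2 h.symm, rfl⟩, rfl⟩
  · simp only [coe_filter, Set.mem_image, Set.mem_ofPred_eq, reduceCtorEq, and_false,
      exists_false, Subgraph.mem_neighborSet, false_iff]
    exact fun h => h.adj_sub

/-- At a man, the two cycle edges are neither both `M`-edges nor both active edges; at a woman
they are not both `M`-edges, and counting shows that one of them is. -/
theorem isRotationSet_of_isCycle (hM : IsMatching G M) (hp : p.IsCycle)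
    (hC : ∀ e, e ∈ C ↔ p.toSubgraph.Adj (.inl e.1) (.inr e.2)) : IsRotationSet G M C := by
  classical
  have hΓ : ∀ c ∈ C, InGamma G M c := fun c hc => ((hC c).1 hc).adj_sub
  have hfst := fun c (hc : c ∈ C) => card_filter_fst_eq_two_of_isCycle hp hC hc
  have hsnd := fun c (hc : c ∈ C) => card_filter_snd_eq_two_of_isCycle hp hC hc
  have hmen : ∀ c ∈ C, ∃ e ∈ M, ∃ a ∉ M, ∀ x, x ∈ C ∧ x.1 = c.1 ↔ x = e ∨ x = a := by
    intro c hc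
    obtain ⟨x, hx, y, hy, hxy⟩ := one_lt_card.1 (hfst c hc ▸ one_lt_two)
    simp only [mem_filter] at hx hy
    have hP : ∃ x ∈ C.filter (·.1 = c.1), x ∈ M := by
      by_contra! h
      have hxa := (hΓ x hx.1).resolve_left (h x (mem_filter.2 hx))
      have hya := (hΓ y hy.1).resolve_left (h y (mem_filter.2 hy))
      exact hxy (hxa.eq_of_fst_eq hya (hx.2.trans hy.2.symm))
    have hnP : ∃ x ∈ C.filter (·.1 = c.1), x ∉ M := by
      by_contra! h
      exact hxy (hM.eq_of_fst_eq (h x (mem_filter.2 hx)) (h y (mem_filter.2 hy))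
        (hx.2.trans hy.2.symm))
    simpa only [mem_filter] using exists_eq_pair_of_card_eq_two (hfst c hc) hP hnP
  have hcard : #(C.image Prod.fst) = #(C.image Prod.snd) := by
    have h₁ := card_eq_mul_card_image_of_card_fiber Prod.fst hfst
    have h₂ := card_eq_mul_card_image_of_card_fiber Prod.snd hsnd
    omega
  refine ⟨hΓ, hmen, fun c hc => ?_⟩
  obtain ⟨x, hx, y, hy, hxy⟩ := one_lt_card.1 (hsnd c hc ▸ one_lt_two)
  simp only [mem_filter] at hx hy
  have hP : ∃ x ∈ C.filter (·.2 = c.2), x ∈ M := by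
    obtain ⟨e, heC, heM, he2⟩ := hM.exists_mem_snd_eq_of_card_image_eq (fun c hc => by
      obtain ⟨e, heM, _, -, hfib⟩ := hmen c hc
      exact ⟨e, ((hfib e).2 (.inl rfl)).1, heM, ((hfib e).2 (.inl rfl)).2⟩) hcard hc
    exact ⟨e, mem_filter.2 ⟨heC, he2⟩, heM⟩
  have hnP : ∃ x ∈ C.filter (·.2 = c.2), x ∉ M := by
    by_contra! h
    exact hxy (hM.eq_of_snd_eq (h x (mem_filter.2 hx)) (h y (mem_filter.2 hy))
      (hx.2.trans hy.2.symm))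
  simpa only [mem_filter] using exists_eq_pair_of_card_eq_two (hsnd c hc) hP hnP

theorem exists_isStable_ne_of_isCycle (h₀ : IsStable G M) (hp : p.IsCycle) :
    ∃ M', IsStable G M' ∧ M' ≠ M := by
  classical
  let C := G.E.filter fun e => p.toSubgraph.Adj (.inl e.1) (.inr e.2)
  have hC : ∀ e, e ∈ C ↔ p.toSubgraph.Adj (.inl e.1) (.inr e.2) := fun e =>
    ⟨fun he => (mem_filter.1 he).2,
      fun he => mem_filter.2 ⟨(he.adj_sub : InGamma G M (e.1, e.2)).mem_E h₀.1, he⟩⟩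
  have hrot := isRotationSet_of_isCycle h₀.1 hp hC
  obtain ⟨c, hc⟩ : C.Nonempty := by
    obtain ⟨v, hv⟩ := Set.nonempty_of_ncard_ne_zero
      (by rw [hp.ncard_neighborSet_toSubgraph_eq_two p.start_mem_support]; simp)
    rcases u with m | w <;> rcases v with m' | w'
    · exact absurd hv.adj_sub id
    · exact ⟨(m, w'), (hC _).2 hv⟩
    · exact ⟨(m', w), (hC _).2 hv.symm⟩
    · exact absurd hv.adj_sub id
  obtain ⟨_, -, a, haM, hfib⟩ := hrot.fiber_fst c hc
  refine ⟨symmDiff M C, hrot.isStable_symmDiff h₀, fun h => haM ?_⟩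
  rw [← h]
  exact mem_symmDiff.2 (.inr ⟨((hfib a).2 (.inr rfl)).1, haM⟩)

end

theorem unique_stable_iff_forest_general {I J : Type} (G : PrefSystem I J)
    (M₀ : Finset (I × J)) (h₀ : IsStable G M₀)
    (hopt : ∀ L, IsStable G L → Preceq G M₀ L) :
    (∀ M : Finset (I × J), IsStable G M → M = M₀) ↔
      (∀ (u : I ⊕ J) (p : (gammaSG G M₀).Walk u u), ¬ p.IsCycle) := by
  refine ⟨fun huniq _ _ hp => ?_, fun hacyc L hL => ?_⟩
  · obtain ⟨M, hM, hne⟩ := exists_isStable_ne_of_isCycle h₀ hp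
    exact hne (huniq M hM)
  · by_contra hne
    exact (hopt L hL).not_isAcyclic_gammaSG h₀ hL hne fun _ => hacyc _

/-- `G` has a unique stable matching iff the active graph
`Γ(M₀)` of the `I`-optimal stable matching `M₀` is a forest. -/
theorem unique_stable_iff_forest {I J : Type} [Fintype I] [Fintype J]
    [DecidableEq I] [DecidableEq J] (G : PrefSystem I J)
    (M₀ : Finset (I × J)) (h₀ : IsStable G M₀)
    (hopt : ∀ L, IsStable G L → Preceq G M₀ L) :
    (∀ M : Finset (I × J), IsStable G M → M = M₀) ↔
      (∀ (u : I ⊕ J) (p : (gammaSG G M₀).Walk u u), ¬ p.IsCycle) :=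
  unique_stable_iff_forest_general G M₀ h₀ hopt
end

section
/- The stable matching polytope: a vector x ∈ ℝ^E belongs to the convex hull of characteristic vectors of stable matchings of a bipartite graph G if and only if it satisfies: x(e) ≥ 0 for all e ∈ E; x(δ(v)) ≤ 1 for all vertices v; and x(γ(e)) ≥ 1 for all e ∈ E, where γ(e) = {f ∈ E : f ⪯ e} is the set of edges equal to e or sharing a vertex v with e and preferred to e at v. -/
variable {I J : Type}

open Classical in
/-- `γ(e)`: the set of edges equal to `e` or sharing a vertex `v` with `e` and
preferred to `e` at `v`. -/
noncomputable def gammaSet (G : PrefSystem I J) (e : I × J) : Finset (I × J) :=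
  G.E.filter (fun f => f = e ∨ (f.1 = e.1 ∧ G.pI e.1 f e) ∨ (f.2 = e.2 ∧ G.pJ e.2 f e))

open Classical in
/-- `δ(m)` for `m ∈ I`. -/
noncomputable def deltaI (G : PrefSystem I J) (m : I) : Finset (I × J) :=
  G.E.filter (fun f => f.1 = m)

open Classical in
/-- `δ(w)` for `w ∈ J`. -/
noncomputable def deltaJ (G : PrefSystem I J) (w : J) : Finset (I × J) :=
  G.E.filter (fun f => f.2 = w)

/-- The stable matching polytope: the convex hull of the characteristic vectors
of the stable matchings of `G`, inside `ℝ^E` (vectors vanish off `E`). -/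
def stablePolytope {I J : Type} [Fintype I] [Fintype J]
    [DecidableEq I] [DecidableEq J] (G : PrefSystem I J) : Set ((I × J) → ℝ) :=
  convexHull ℝ {y : (I × J) → ℝ |
    ∃ M : Finset (I × J), IsStable G M ∧ y = fun e => if e ∈ M then (1 : ℝ) else 0}

namespace StablePoly

open Finset
open Classical

variable {I J : Type}

section Aux

variable (G : PrefSystem I J)

lemma pI_asymm {m : I} {e f : I × J} (h1 : G.pI m e f) (h2 : G.pI m f e) : False :=
  G.pI_irrefl m e (G.pI_trans m e f e h1 h2)

lemma pJ_asymm {w : J} {e f : I × J} (h1 : G.pJ w e f) (h2 : G.pJ w f e) : False :=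
  G.pJ_irrefl w e (G.pJ_trans w e f e h1 h2)

/-- edges strictly better than `e` at its man -/
noncomputable def Bm (e : I × J) : Finset (I × J) :=
  G.E.filter (fun f => f.1 = e.1 ∧ G.pI e.1 f e)
/-- edges strictly worse than `e` at its man -/
noncomputable def Wm (e : I × J) : Finset (I × J) :=
  G.E.filter (fun f => f.1 = e.1 ∧ G.pI e.1 e f)
/-- edges strictly better than `e` at its woman -/
noncomputable def Bw (e : I × J) : Finset (I × J) :=
  G.E.filter (fun f => f.2 = e.2 ∧ G.pJ e.2 f e)
/-- edges strictly worse than `e` at its woman -/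
noncomputable def Ww (e : I × J) : Finset (I × J) :=
  G.E.filter (fun f => f.2 = e.2 ∧ G.pJ e.2 e f)

lemma mem_Bm {e f : I × J} : f ∈ Bm G e ↔ f ∈ G.E ∧ f.1 = e.1 ∧ G.pI e.1 f e := by
  simp [Bm, Finset.mem_filter]
lemma mem_Wm {e f : I × J} : f ∈ Wm G e ↔ f ∈ G.E ∧ f.1 = e.1 ∧ G.pI e.1 e f := by
  simp [Wm, Finset.mem_filter]
lemma mem_Bw {e f : I × J} : f ∈ Bw G e ↔ f ∈ G.E ∧ f.2 = e.2 ∧ G.pJ e.2 f e := by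
  simp [Bw, Finset.mem_filter]
lemma mem_Ww {e f : I × J} : f ∈ Ww G e ↔ f ∈ G.E ∧ f.2 = e.2 ∧ G.pJ e.2 e f := by
  simp [Ww, Finset.mem_filter]

lemma notMem_Bm (e : I × J) : e ∉ Bm G e := by
  rw [mem_Bm]; rintro ⟨-, -, h⟩; exact G.pI_irrefl e.1 e h
lemma notMem_Wm (e : I × J) : e ∉ Wm G e := by
  rw [mem_Wm]; rintro ⟨-, -, h⟩; exact G.pI_irrefl e.1 e h
lemma notMem_Bw (e : I × J) : e ∉ Bw G e := by
  rw [mem_Bw]; rintro ⟨-, -, h⟩; exact G.pJ_irrefl e.2 e h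
lemma notMem_Ww (e : I × J) : e ∉ Ww G e := by
  rw [mem_Ww]; rintro ⟨-, -, h⟩; exact G.pJ_irrefl e.2 e h

lemma disj_BmWm (e : I × J) : Disjoint (Bm G e) (Wm G e) := by
  rw [Finset.disjoint_left]
  intro f hf hf'
  rw [mem_Bm] at hf; rw [mem_Wm] at hf'
  exact pI_asymm G hf.2.2 hf'.2.2

lemma disj_BwWw (e : I × J) : Disjoint (Bw G e) (Ww G e) := by
  rw [Finset.disjoint_left]
  intro f hf hf'
  rw [mem_Bw] at hf; rw [mem_Ww] at hf'
  exact pJ_asymm G hf.2.2 hf'.2.2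

lemma disj_BmBw (e : I × J) : Disjoint (Bm G e) (Bw G e) := by
  rw [Finset.disjoint_left]
  intro f hf hf'
  rw [mem_Bm] at hf; rw [mem_Bw] at hf'
  have : f = e := Prod.ext hf.2.1 hf'.2.1
  subst this
  exact G.pI_irrefl f.1 f hf.2.2

lemma deltaI_eq {e : I × J} (he : e ∈ G.E) :
    deltaI G e.1 = insert e (Bm G e ∪ Wm G e) := by
  ext f
  simp only [deltaI, Finset.mem_filter, Finset.mem_insert, Finset.mem_union, mem_Bm, mem_Wm]
  constructor
  · rintro ⟨hfE, h1⟩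
    by_cases hfe : f = e
    · exact Or.inl hfe
    · rcases G.pI_total e.1 f e hfE he h1 rfl hfe with h | h
      · exact Or.inr (Or.inl ⟨hfE, h1, h⟩)
      · exact Or.inr (Or.inr ⟨hfE, h1, h⟩)
  · rintro (rfl | ⟨hfE, h1, _⟩ | ⟨hfE, h1, _⟩)
    · exact ⟨he, rfl⟩
    · exact ⟨hfE, h1⟩
    · exact ⟨hfE, h1⟩

lemma deltaJ_eq {e : I × J} (he : e ∈ G.E) :
    deltaJ G e.2 = insert e (Bw G e ∪ Ww G e) := by
  ext f
  simp only [deltaJ, Finset.mem_filter, Finset.mem_insert, Finset.mem_union, mem_Bw, mem_Ww]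
  constructor
  · rintro ⟨hfE, h1⟩
    by_cases hfe : f = e
    · exact Or.inl hfe
    · rcases G.pJ_total e.2 f e hfE he h1 rfl hfe with h | h
      · exact Or.inr (Or.inl ⟨hfE, h1, h⟩)
      · exact Or.inr (Or.inr ⟨hfE, h1, h⟩)
  · rintro (rfl | ⟨hfE, h1, _⟩ | ⟨hfE, h1, _⟩)
    · exact ⟨he, rfl⟩
    · exact ⟨hfE, h1⟩
    · exact ⟨hfE, h1⟩

lemma gammaSet_eq {e : I × J} (he : e ∈ G.E) :
    gammaSet G e = insert e (Bm G e ∪ Bw G e) := by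
  ext f
  simp only [gammaSet, Finset.mem_filter, Finset.mem_insert, Finset.mem_union, mem_Bm, mem_Bw]
  constructor
  · rintro ⟨hfE, rfl | h | h⟩
    · exact Or.inl rfl
    · exact Or.inr (Or.inl ⟨hfE, h⟩)
    · exact Or.inr (Or.inr ⟨hfE, h⟩)
  · rintro (rfl | ⟨hfE, h⟩ | ⟨hfE, h⟩)
    · exact ⟨he, Or.inl rfl⟩
    · exact ⟨hfE, Or.inr (Or.inl h)⟩
    · exact ⟨hfE, Or.inr (Or.inr h)⟩

lemma mem_deltaI {m : I} {f : I × J} : f ∈ deltaI G m ↔ f ∈ G.E ∧ f.1 = m := by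
  simp [deltaI, Finset.mem_filter]

lemma mem_deltaJ {w : J} {f : I × J} : f ∈ deltaJ G w ↔ f ∈ G.E ∧ f.2 = w := by
  simp [deltaJ, Finset.mem_filter]

lemma mem_gammaSet {e f : I × J} :
    f ∈ gammaSet G e ↔ f ∈ G.E ∧
      (f = e ∨ (f.1 = e.1 ∧ G.pI e.1 f e) ∨ (f.2 = e.2 ∧ G.pJ e.2 f e)) := by
  simp [gammaSet, Finset.mem_filter]

variable (x : (I × J) → ℝ)

lemma sum_deltaI {e : I × J} (he : e ∈ G.E) :
    ∑ f ∈ deltaI G e.1, x f = x e + (∑ f ∈ Bm G e, x f + ∑ f ∈ Wm G e, x f) := by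
  rw [deltaI_eq G he, Finset.sum_insert, Finset.sum_union (disj_BmWm G e)]
  simp only [Finset.mem_union, not_or]
  exact ⟨notMem_Bm G e, notMem_Wm G e⟩

lemma sum_deltaJ {e : I × J} (he : e ∈ G.E) :
    ∑ f ∈ deltaJ G e.2, x f = x e + (∑ f ∈ Bw G e, x f + ∑ f ∈ Ww G e, x f) := by
  rw [deltaJ_eq G he, Finset.sum_insert, Finset.sum_union (disj_BwWw G e)]
  simp only [Finset.mem_union, not_or]
  exact ⟨notMem_Bw G e, notMem_Ww G e⟩

lemma sum_gamma {e : I × J} (he : e ∈ G.E) :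
    ∑ f ∈ gammaSet G e, x f = x e + (∑ f ∈ Bm G e, x f + ∑ f ∈ Bw G e, x f) := by
  rw [gammaSet_eq G he, Finset.sum_insert, Finset.sum_union (disj_BmBw G e)]
  simp only [Finset.mem_union, not_or]
  exact ⟨notMem_Bm G e, notMem_Bw G e⟩

end Aux

end StablePoly
namespace StablePoly

open Finset
open Classical

variable {I J : Type}

section Aux2

variable (G : PrefSystem I J) (x : (I × J) → ℝ)

/-- the hypotheses of the hard direction -/
structure Good (G : PrefSystem I J) (x : (I × J) → ℝ) : Prop where
  nonneg : ∀ e, 0 ≤ x e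
  offE : ∀ e, e ∉ G.E → x e = 0
  dI : ∀ m : I, ∑ e ∈ deltaI G m, x e ≤ 1
  dJ : ∀ w : J, ∑ e ∈ deltaJ G w, x e ≤ 1
  gam : ∀ e ∈ G.E, 1 ≤ ∑ f ∈ gammaSet G e, x f

/-- man-side interval start -/
noncomputable def sfun (e : I × J) : ℝ := ∑ f ∈ Bm G e, x f

/-- woman-side interval start (slack at the bottom, then worse edges) -/
noncomputable def tfun (e : I × J) : ℝ :=
  (1 - ∑ f ∈ deltaJ G e.2, x f) + ∑ f ∈ Ww G e, x f

variable {G x}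

lemma sfun_nonneg (hg : Good G x) (e : I × J) : 0 ≤ sfun G x e :=
  Finset.sum_nonneg fun f _ => hg.nonneg f

lemma sfun_add_le_one (hg : Good G x) {e : I × J} (he : e ∈ G.E) :
    sfun G x e + x e ≤ 1 := by
  have h := sum_deltaI G x he
  have h2 : 0 ≤ ∑ f ∈ Wm G e, x f := Finset.sum_nonneg fun f _ => hg.nonneg f
  have := hg.dI e.1
  unfold sfun
  linarith

lemma tfun_le_sfun (hg : Good G x) {e : I × J} (he : e ∈ G.E) :
    tfun G x e ≤ sfun G x e := by
  have hγ := hg.gam e he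
  rw [sum_gamma G x he] at hγ
  have hδ := sum_deltaJ G x he
  unfold tfun sfun
  linarith

/-- swapping ordered pairs on the man side -/
lemma swap_sum_man :
    ∑ e ∈ G.E, x e * sfun G x e = ∑ e ∈ G.E, x e * ∑ f ∈ Wm G e, x f := by
  have lhs : ∑ e ∈ G.E, x e * sfun G x e
      = ∑ e ∈ G.E, ∑ f ∈ G.E, (if f.1 = e.1 ∧ G.pI e.1 f e then x e * x f else 0) := by
    refine Finset.sum_congr rfl fun e _ => ?_
    rw [sfun, Finset.mul_sum, Bm, Finset.sum_filter]
  have rhs : ∑ e ∈ G.E, x e * ∑ f ∈ Wm G e, x f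
      = ∑ e ∈ G.E, ∑ f ∈ G.E, (if f.1 = e.1 ∧ G.pI e.1 e f then x e * x f else 0) := by
    refine Finset.sum_congr rfl fun e _ => ?_
    rw [Finset.mul_sum, Wm, Finset.sum_filter]
  rw [lhs, rhs, Finset.sum_comm]
  refine Finset.sum_congr rfl fun e _ => Finset.sum_congr rfl fun f _ => ?_
  by_cases h : e.1 = f.1 ∧ G.pI f.1 e f
  · rw [if_pos h, if_pos ⟨h.1.symm, by rw [h.1]; exact h.2⟩, mul_comm]
  · rw [if_neg h, if_neg (fun h' => h ⟨h'.1.symm, by rw [h'.1]; exact h'.2⟩)]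

/-- swapping ordered pairs on the woman side -/
lemma swap_sum_woman :
    ∑ e ∈ G.E, x e * ∑ f ∈ Bw G e, x f = ∑ e ∈ G.E, x e * ∑ f ∈ Ww G e, x f := by
  have lhs : ∑ e ∈ G.E, x e * ∑ f ∈ Bw G e, x f
      = ∑ e ∈ G.E, ∑ f ∈ G.E, (if f.2 = e.2 ∧ G.pJ e.2 f e then x e * x f else 0) := by
    refine Finset.sum_congr rfl fun e _ => ?_
    rw [Finset.mul_sum, Bw, Finset.sum_filter]
  have rhs : ∑ e ∈ G.E, x e * ∑ f ∈ Ww G e, x f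
      = ∑ e ∈ G.E, ∑ f ∈ G.E, (if f.2 = e.2 ∧ G.pJ e.2 e f then x e * x f else 0) := by
    refine Finset.sum_congr rfl fun e _ => ?_
    rw [Finset.mul_sum, Ww, Finset.sum_filter]
  rw [lhs, rhs, Finset.sum_comm]
  refine Finset.sum_congr rfl fun e _ => Finset.sum_congr rfl fun f _ => ?_
  by_cases h : e.2 = f.2 ∧ G.pJ f.2 e f
  · rw [if_pos h, if_pos ⟨h.1.symm, by rw [h.1]; exact h.2⟩, mul_comm]
  · rw [if_neg h, if_neg (fun h' => h ⟨h'.1.symm, by rw [h'.1]; exact h'.2⟩)]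

/-- the key equality: on positive edges the two interval starts agree -/
lemma key_eq (hg : Good G x) {e : I × J} (he : e ∈ G.E) (hx : 0 < x e) :
    sfun G x e = tfun G x e := by
  -- total sum of x e * (sfun - tfun) over E is ≤ 0, each term ≥ 0
  have hterm : ∀ f ∈ G.E, 0 ≤ x f * (sfun G x f - tfun G x f) := fun f hf =>
    mul_nonneg (hg.nonneg f) (by linarith [tfun_le_sfun hg hf])
  have hsum0 : ∑ f ∈ G.E, x f * (sfun G x f - tfun G x f) ≤ 0 := by
    have hman : ∑ f ∈ G.E, x f * sfun G x f + ∑ f ∈ G.E, x f * ∑ g ∈ Wm G f, x g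
        = (∑ f ∈ G.E, x f * ∑ g ∈ deltaI G f.1, x g) - ∑ f ∈ G.E, x f * x f := by
      rw [← Finset.sum_sub_distrib, ← Finset.sum_add_distrib]
      refine Finset.sum_congr rfl fun f hf => ?_
      rw [sfun, sum_deltaI G x hf]; ring
    have hwom : ∑ f ∈ G.E, x f * ∑ g ∈ Bw G f, x g + ∑ f ∈ G.E, x f * ∑ g ∈ Ww G f, x g
        = (∑ f ∈ G.E, x f * ∑ g ∈ deltaJ G f.2, x g) - ∑ f ∈ G.E, x f * x f := by
      rw [← Finset.sum_sub_distrib, ← Finset.sum_add_distrib]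
      refine Finset.sum_congr rfl fun f hf => ?_
      rw [sum_deltaJ G x hf]; ring
    have htf : ∑ f ∈ G.E, x f * tfun G x f
        = (∑ f ∈ G.E, x f) - (∑ f ∈ G.E, x f * ∑ g ∈ deltaJ G f.2, x g)
            + ∑ f ∈ G.E, x f * ∑ g ∈ Ww G f, x g := by
      rw [← Finset.sum_sub_distrib, ← Finset.sum_add_distrib]
      refine Finset.sum_congr rfl fun f hf => ?_
      rw [tfun]; ring
    have hIle : ∑ f ∈ G.E, x f * ∑ g ∈ deltaI G f.1, x g ≤ ∑ f ∈ G.E, x f := by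
      refine Finset.sum_le_sum fun f hf => ?_
      have h1 := hg.dI f.1
      have h2 := hg.nonneg f
      nlinarith
    have hJle : ∑ f ∈ G.E, x f * ∑ g ∈ deltaJ G f.2, x g ≤ ∑ f ∈ G.E, x f := by
      refine Finset.sum_le_sum fun f hf => ?_
      have h1 := hg.dJ f.2
      have h2 := hg.nonneg f
      nlinarith
    have hsplit : ∑ f ∈ G.E, x f * (sfun G x f - tfun G x f)
        = ∑ f ∈ G.E, x f * sfun G x f - ∑ f ∈ G.E, x f * tfun G x f := by
      rw [← Finset.sum_sub_distrib]
      exact Finset.sum_congr rfl fun f _ => by ring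
    have hswapM := swap_sum_man (G := G) (x := x)
    have hswapW := swap_sum_woman (G := G) (x := x)
    rw [hsplit]
    linarith
  have hall := (Finset.sum_eq_zero_iff_of_nonneg hterm).1
    (le_antisymm hsum0 (Finset.sum_nonneg hterm))
  have h0 := hall e he
  rcases mul_eq_zero.1 h0 with h | h
  · exact absurd h (ne_of_gt hx)
  · linarith

end Aux2

end StablePoly
namespace StablePoly

open Finset
open Classical

variable {I J : Type}

section Aux3

variable (G : PrefSystem I J) (x : (I × J) → ℝ)

/-- the matching at height `θ` -/
noncomputable def Mset (θ : ℝ) : Finset (I × J) :=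
  G.E.filter (fun e => sfun G x e ≤ θ ∧ θ < sfun G x e + x e)

variable {G x}

lemma mem_Mset {θ : ℝ} {e : I × J} :
    e ∈ Mset G x θ ↔ e ∈ G.E ∧ sfun G x e ≤ θ ∧ θ < sfun G x e + x e := by
  simp [Mset, Finset.mem_filter]

/-- better edges at the same man start lower plus their mass -/
lemma man_interval_order (hg : Good G x) {e f : I × J} (he : e ∈ G.E) (hf : f ∈ G.E)
    (h1 : f.1 = e.1) (hp : G.pI e.1 f e) : sfun G x f + x f ≤ sfun G x e := by
  have hsub : insert f (Bm G f) ⊆ Bm G e := by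
    intro g hg'
    rcases Finset.mem_insert.1 hg' with rfl | hg'
    · exact (mem_Bm G).2 ⟨hf, h1, hp⟩
    · rw [mem_Bm] at hg' ⊢
      refine ⟨hg'.1, hg'.2.1.trans h1, ?_⟩
      have : G.pI e.1 g f := by rw [← h1]; exact hg'.2.2
      exact G.pI_trans e.1 g f e this hp
  have := Finset.sum_le_sum_of_subset_of_nonneg hsub (fun g _ _ => hg.nonneg g)
  rw [Finset.sum_insert (notMem_Bm G f)] at this
  unfold sfun
  linarith

/-- better edges at the same woman start higher -/
lemma woman_interval_order (hg : Good G x) {e f : I × J} (he : e ∈ G.E) (hf : f ∈ G.E)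
    (h1 : f.2 = e.2) (hp : G.pJ e.2 f e) : tfun G x e + x e ≤ tfun G x f := by
  have hsub : insert e (Ww G e) ⊆ Ww G f := by
    intro g hg'
    rcases Finset.mem_insert.1 hg' with rfl | hg'
    · rw [mem_Ww]
      exact ⟨he, h1.symm, by rw [h1]; exact hp⟩
    · rw [mem_Ww] at hg' ⊢
      refine ⟨hg'.1, hg'.2.1.trans h1.symm, ?_⟩
      rw [h1]
      exact G.pJ_trans e.2 f e g hp hg'.2.2
  have := Finset.sum_le_sum_of_subset_of_nonneg hsub (fun g _ _ => hg.nonneg g)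
  rw [Finset.sum_insert (notMem_Ww G e)] at this
  unfold tfun
  rw [show f.2 = e.2 from h1]
  linarith

/-- a nonempty finite set of edges at a common man has a worst element -/
lemma exists_min_pI (m : I) (s : Finset (I × J)) (hs : s.Nonempty)
    (hsub : ∀ f ∈ s, f ∈ G.E ∧ f.1 = m) :
    ∃ g ∈ s, ∀ f ∈ s, f ≠ g → G.pI m f g := by
  classical
  induction s using Finset.induction_on with
  | empty => exact absurd hs (by simp)
  | @insert a s' ha ih =>
    by_cases hs' : s'.Nonempty
    · obtain ⟨g, hgs, hgmin⟩ := ih hs' (fun f hf => hsub f (Finset.mem_insert_of_mem hf))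
      have haE := hsub a (Finset.mem_insert_self a s')
      have hgE := hsub g (Finset.mem_insert_of_mem hgs)
      by_cases hag : a = g
      · subst hag
        refine ⟨a, Finset.mem_insert_self a s', ?_⟩
        intro f hf hfa
        rcases Finset.mem_insert.1 hf with rfl | hf'
        · exact absurd rfl hfa
        · exact hgmin f hf' hfa
      · rcases G.pI_total m a g haE.1 hgE.1 haE.2 hgE.2 hag with h | h
        · -- a better than g : g still worst
          refine ⟨g, Finset.mem_insert_of_mem hgs, ?_⟩
          intro f hf hfg
          rcases Finset.mem_insert.1 hf with rfl | hf'
          · exact h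
          · exact hgmin f hf' hfg
        · -- g better than a : a is the new worst
          refine ⟨a, Finset.mem_insert_self a s', ?_⟩
          intro f hf hfa
          rcases Finset.mem_insert.1 hf with rfl | hf'
          · exact absurd rfl hfa
          · by_cases hfg : f = g
            · subst hfg; exact h
            · exact G.pI_trans m f g a (hgmin f hf' hfg) h
    · rw [Finset.not_nonempty_iff_eq_empty] at hs'
      subst hs'
      refine ⟨a, Finset.mem_insert_self a ∅, ?_⟩
      intro f hf hfa
      rcases Finset.mem_insert.1 hf with rfl | hf'
      · exact absurd rfl hfa
      · exact absurd hf' (by simp)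

/-- a nonempty finite set of edges at a common woman has a worst element -/
lemma exists_min_pJ (w : J) (s : Finset (I × J)) (hs : s.Nonempty)
    (hsub : ∀ f ∈ s, f ∈ G.E ∧ f.2 = w) :
    ∃ g ∈ s, ∀ f ∈ s, f ≠ g → G.pJ w f g := by
  classical
  induction s using Finset.induction_on with
  | empty => exact absurd hs (by simp)
  | @insert a s' ha ih =>
    by_cases hs' : s'.Nonempty
    · obtain ⟨g, hgs, hgmin⟩ := ih hs' (fun f hf => hsub f (Finset.mem_insert_of_mem hf))
      have haE := hsub a (Finset.mem_insert_self a s')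
      have hgE := hsub g (Finset.mem_insert_of_mem hgs)
      by_cases hag : a = g
      · subst hag
        refine ⟨a, Finset.mem_insert_self a s', ?_⟩
        intro f hf hfa
        rcases Finset.mem_insert.1 hf with rfl | hf'
        · exact absurd rfl hfa
        · exact hgmin f hf' hfa
      · rcases G.pJ_total w a g haE.1 hgE.1 haE.2 hgE.2 hag with h | h
        · refine ⟨g, Finset.mem_insert_of_mem hgs, ?_⟩
          intro f hf hfg
          rcases Finset.mem_insert.1 hf with rfl | hf'
          · exact h
          · exact hgmin f hf' hfg
        · refine ⟨a, Finset.mem_insert_self a s', ?_⟩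
          intro f hf hfa
          rcases Finset.mem_insert.1 hf with rfl | hf'
          · exact absurd rfl hfa
          · by_cases hfg : f = g
            · subst hfg; exact h
            · exact G.pJ_trans w f g a (hgmin f hf' hfg) h
    · rw [Finset.not_nonempty_iff_eq_empty] at hs'
      subst hs'
      refine ⟨a, Finset.mem_insert_self a ∅, ?_⟩
      intro f hf hfa
      rcases Finset.mem_insert.1 hf with rfl | hf'
      · exact absurd rfl hfa
      · exact absurd hf' (by simp)

/-- man-side coverage: anything below `sfun e` is covered by a better edge of `e.1` -/
lemma man_cover (hg : Good G x) :
    ∀ n : ℕ, ∀ e : I × J, e ∈ G.E → (Bm G e).card ≤ n → ∀ θ : ℝ, 0 ≤ θ →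
      θ < sfun G x e → ∃ f ∈ Mset G x θ, f.1 = e.1 ∧ G.pI e.1 f e := by
  intro n
  induction n with
  | zero =>
    intro e heE hcard θ hθ hθs
    rw [Nat.le_zero, Finset.card_eq_zero] at hcard
    rw [sfun, hcard] at hθs
    simp at hθs
    linarith
  | succ n ih =>
    intro e heE hcard θ hθ hθs
    have hne : (Bm G e).Nonempty := by
      by_contra hx
      rw [Finset.not_nonempty_iff_eq_empty] at hx
      rw [sfun, hx] at hθs
      simp at hθs
      linarith
    obtain ⟨g, hgBm, hgmin⟩ := exists_min_pI (G := G) e.1 (Bm G e) hne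
      (fun f hf => ⟨((mem_Bm G).1 hf).1, ((mem_Bm G).1 hf).2.1⟩)
    have hgE := ((mem_Bm G).1 hgBm).1
    have hg1 : g.1 = e.1 := ((mem_Bm G).1 hgBm).2.1
    have hgpe : G.pI e.1 g e := ((mem_Bm G).1 hgBm).2.2
    have hBg : Bm G g = (Bm G e).erase g := by
      ext f
      rw [Finset.mem_erase, mem_Bm, mem_Bm]
      constructor
      · rintro ⟨hfE, hf1, hfp⟩
        have hfp' : G.pI e.1 f g := by rw [← hg1]; exact hfp
        refine ⟨?_, hfE, hf1.trans hg1, G.pI_trans e.1 f g e hfp' hgpe⟩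
        rintro rfl
        exact G.pI_irrefl e.1 f hfp'
      · rintro ⟨hfg, hfE, hf1, _⟩
        refine ⟨hfE, hf1.trans hg1.symm, ?_⟩
        rw [hg1]
        exact hgmin f ((mem_Bm G).2 ⟨hfE, hf1, ‹_›⟩) hfg
    have hsg : sfun G x e = x g + sfun G x g := by
      unfold sfun
      rw [hBg, Finset.add_sum_erase _ _ hgBm]
    by_cases hcase : θ < sfun G x g
    · have hcard' : (Bm G g).card ≤ n := by
        rw [hBg, Finset.card_erase_of_mem hgBm]
        omega
      obtain ⟨f, hfM, hf1, hfp⟩ := ih g hgE hcard' θ hθ hcase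
      refine ⟨f, hfM, hf1.trans hg1, ?_⟩
      have : G.pI e.1 f g := by rw [← hg1]; exact hfp
      exact G.pI_trans e.1 f g e this hgpe
    · push_neg at hcase
      refine ⟨g, (mem_Mset).2 ⟨hgE, hcase, by linarith⟩, hg1, hgpe⟩

/-- woman-side coverage: anything at or above `tfun e` (below 1) is covered
by an edge of `e.2` at least as good as `e` -/
lemma woman_cover (hg : Good G x) :
    ∀ n : ℕ, ∀ e : I × J, e ∈ G.E → (Bw G e).card ≤ n → ∀ θ : ℝ, θ < 1 →
      tfun G x e ≤ θ → ∃ f ∈ Mset G x θ, f.2 = e.2 ∧ (f = e ∨ G.pJ e.2 f e) := by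
  intro n
  induction n with
  | zero =>
    intro e heE hcard θ hθ1 hte
    by_cases hlt : θ < tfun G x e + x e
    · have hx : 0 < x e := by linarith
      have hst : sfun G x e = tfun G x e := key_eq hg heE hx
      exact ⟨e, (mem_Mset).2 ⟨heE, by linarith, by linarith⟩, rfl, Or.inl rfl⟩
    · exfalso
      push_neg at hlt
      rw [Nat.le_zero, Finset.card_eq_zero] at hcard
      have hδ := sum_deltaJ G x heE
      have hBw0 : ∑ f ∈ Bw G e, x f = 0 := by rw [hcard]; simp
      unfold tfun at hlt
      linarith
  | succ n ih =>
    intro e heE hcard θ hθ1 hte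
    by_cases hlt : θ < tfun G x e + x e
    · have hx : 0 < x e := by linarith
      have hst : sfun G x e = tfun G x e := key_eq hg heE hx
      exact ⟨e, (mem_Mset).2 ⟨heE, by linarith, by linarith⟩, rfl, Or.inl rfl⟩
    · push_neg at hlt
      have hne : (Bw G e).Nonempty := by
        by_contra hxx
        rw [Finset.not_nonempty_iff_eq_empty] at hxx
        have hδ := sum_deltaJ G x heE
        have hBw0 : ∑ f ∈ Bw G e, x f = 0 := by rw [hxx]; simp
        unfold tfun at hlt
        linarith
      obtain ⟨g, hgBw, hgmin⟩ := exists_min_pJ (G := G) e.2 (Bw G e) hne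
        (fun f hf => ⟨((mem_Bw G).1 hf).1, ((mem_Bw G).1 hf).2.1⟩)
      have hgE := ((mem_Bw G).1 hgBw).1
      have hg2 : g.2 = e.2 := ((mem_Bw G).1 hgBw).2.1
      have hgpe : G.pJ e.2 g e := ((mem_Bw G).1 hgBw).2.2
      have hWg : Ww G g = insert e (Ww G e) := by
        ext f
        rw [Finset.mem_insert, mem_Ww, mem_Ww]
        constructor
        · rintro ⟨hfE, hf2, hfp⟩
          have hfp' : G.pJ e.2 g f := by rw [← hg2]; exact hfp
          by_cases hfe : f = e
          · exact Or.inl hfe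
          · refine Or.inr ⟨hfE, hf2.trans hg2, ?_⟩
            rcases G.pJ_total e.2 f e hfE heE (hf2.trans hg2) rfl hfe with h | h
            · exfalso
              have hfBw : f ∈ Bw G e := (mem_Bw G).2 ⟨hfE, hf2.trans hg2, h⟩
              by_cases hfg : f = g
              · subst hfg; exact G.pJ_irrefl e.2 f (by rw [← hg2]; exact hfp)
              · exact pJ_asymm G (hgmin f hfBw hfg) (by rw [hg2] at hfp; exact hfp)
            · exact h
        · rintro (rfl | ⟨hfE, hf2, hfp⟩)
          · exact ⟨heE, hg2.symm, by rw [hg2]; exact hgpe⟩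
          · exact ⟨hfE, hf2.trans hg2.symm, by rw [hg2]; exact G.pJ_trans e.2 g e f hgpe hfp⟩
      have htg : tfun G x g = tfun G x e + x e := by
        unfold tfun
        rw [hWg, Finset.sum_insert (notMem_Ww G e), show g.2 = e.2 from hg2]
        ring
      have hBg : Bw G g = (Bw G e).erase g := by
        ext f
        rw [Finset.mem_erase, mem_Bw, mem_Bw]
        constructor
        · rintro ⟨hfE, hf2, hfp⟩
          have hfp' : G.pJ e.2 f g := by rw [← hg2]; exact hfp
          refine ⟨?_, hfE, hf2.trans hg2, G.pJ_trans e.2 f g e hfp' hgpe⟩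
          rintro rfl
          exact G.pJ_irrefl e.2 f hfp'
        · rintro ⟨hfg, hfE, hf2, hfp⟩
          refine ⟨hfE, hf2.trans hg2.symm, ?_⟩
          rw [hg2]
          exact hgmin f ((mem_Bw G).2 ⟨hfE, hf2, hfp⟩) hfg
      have hcard' : (Bw G g).card ≤ n := by
        rw [hBg, Finset.card_erase_of_mem hgBw]
        have := hcard
        omega
      obtain ⟨f, hfM, hf2, hfp⟩ := ih g hgE hcard' θ hθ1 (by linarith)
      refine ⟨f, hfM, hf2.trans hg2, Or.inr ?_⟩
      rcases hfp with rfl | hfp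
      · exact (by rw [← hg2] at hgpe ⊢; exact hgpe : G.pJ e.2 f e)
      · have : G.pJ e.2 f g := by rw [← hg2]; exact hfp
        exact G.pJ_trans e.2 f g e this hgpe

/-- `Mset θ` is a stable matching for `θ ∈ [0,1)` -/
lemma Mset_stable (hg : Good G x) {θ : ℝ} (h0 : 0 ≤ θ) (h1 : θ < 1) :
    IsStable G (Mset G x θ) := by
  constructor
  · constructor
    · intro e he; exact ((mem_Mset).1 he).1
    · intro e he f hf hef
      have heM := (mem_Mset).1 he
      have hfM := (mem_Mset).1 hf
      constructor
      · -- distinct man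
        intro h11
        rcases G.pI_total e.1 e f heM.1 hfM.1 rfl h11.symm hef with h | h
        · -- e better at f.1 = e.1
          have := man_interval_order hg hfM.1 heM.1 h11 (by rw [← h11]; exact h)
          linarith [heM.2.1, heM.2.2, hfM.2.1, hfM.2.2]
        · have := man_interval_order hg heM.1 hfM.1 h11.symm h
          linarith [heM.2.1, heM.2.2, hfM.2.1, hfM.2.2]
      · -- distinct woman
        intro h22
        have hxe : 0 < x e := by linarith [heM.2.1, heM.2.2]
        have hxf : 0 < x f := by linarith [hfM.2.1, hfM.2.2]
        have hse := key_eq hg heM.1 hxe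
        have hsf := key_eq hg hfM.1 hxf
        rcases G.pJ_total e.2 e f heM.1 hfM.1 rfl h22.symm hef with h | h
        · have := woman_interval_order hg hfM.1 heM.1 h22 (by rw [← h22]; exact h)
          linarith [heM.2.1, heM.2.2, hfM.2.1, hfM.2.2]
        · have := woman_interval_order hg heM.1 hfM.1 h22.symm h
          linarith [heM.2.1, heM.2.2, hfM.2.1, hfM.2.2]
  · rintro e ⟨heE, heM, hI, hJ⟩
    by_cases hθs : θ < sfun G x e
    · obtain ⟨f, hfM, hf1, hfp⟩ := man_cover hg (Bm G e).card e heE le_rfl θ h0 hθs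
      exact pI_asymm G (hI f hfM hf1) hfp
    · push_neg at hθs
      have hnotM : ¬ (sfun G x e ≤ θ ∧ θ < sfun G x e + x e) := by
        intro hc
        exact heM ((mem_Mset).2 ⟨heE, hc⟩)
      have hθs' : sfun G x e + x e ≤ θ := by
        by_contra hc
        push_neg at hc
        exact hnotM ⟨hθs, hc⟩
      have hte : tfun G x e ≤ θ := by
        have := tfun_le_sfun hg heE
        have := hg.nonneg e
        linarith
      obtain ⟨f, hfM, hf2, hfp⟩ := woman_cover hg (Bw G e).card e heE le_rfl θ h1 hte
      rcases hfp with rfl | hfp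
      · exact heM hfM
      · exact pJ_asymm G (hJ f hfM hf2) hfp

end Aux3

end StablePoly
namespace StablePoly

open Finset
open Classical

variable {I J : Type}

section Tele

/-- the next breakpoint after `a` in `C` -/
noncomputable def nxt (C : Finset ℝ) (a : ℝ) : ℝ :=
  if h : (C.filter (fun b => a < b)).Nonempty then (C.filter (fun b => a < b)).min' h
  else a + 1

lemma nxt_spec {C : Finset ℝ} {a b : ℝ} (hb : b ∈ C) (hab : a < b) :
    a < nxt C a ∧ nxt C a ∈ C ∧ nxt C a ≤ b := by
  have hne : (C.filter (fun b => a < b)).Nonempty := ⟨b, Finset.mem_filter.2 ⟨hb, hab⟩⟩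
  rw [nxt, dif_pos hne]
  have hmem := Finset.min'_mem _ hne
  rw [Finset.mem_filter] at hmem
  exact ⟨hmem.2, hmem.1, Finset.min'_le _ b (Finset.mem_filter.2 ⟨hb, hab⟩)⟩

lemma tele (C : Finset ℝ) :
    ∀ n : ℕ, ∀ u v : ℝ, u ∈ C → v ∈ C → u ≤ v →
      (C.filter (fun a => u ≤ a ∧ a < v)).card ≤ n →
      ∑ a ∈ C.filter (fun a => u ≤ a ∧ a < v), (nxt C a - a) = v - u := by
  intro n
  induction n with
  | zero =>
    intro u v hu hv huv hcard
    have : u = v := by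
      by_contra hne
      have huv' : u < v := lt_of_le_of_ne huv hne
      have : u ∈ C.filter (fun a => u ≤ a ∧ a < v) :=
        Finset.mem_filter.2 ⟨hu, le_rfl, huv'⟩
      have := Finset.card_pos.2 ⟨u, this⟩
      omega
    subst this
    rw [Finset.filter_false_of_mem (fun a _ h => by exact absurd (lt_of_le_of_lt h.1 h.2) (lt_irrefl u))]
    · simp
  | succ n ih =>
    intro u v hu hv huv hcard
    by_cases huv' : u < v
    · obtain ⟨hlt, hmem, hle⟩ := nxt_spec hv huv'
      have setEq : C.filter (fun a => u ≤ a ∧ a < v)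
          = insert u (C.filter (fun a => nxt C u ≤ a ∧ a < v)) := by
        ext a
        rw [Finset.mem_insert, Finset.mem_filter, Finset.mem_filter]
        constructor
        · rintro ⟨haC, hua, hav⟩
          by_cases hau : a = u
          · exact Or.inl hau
          · have : u < a := lt_of_le_of_ne hua (Ne.symm hau)
            exact Or.inr ⟨haC, (nxt_spec haC this).2.2, hav⟩
        · rintro (rfl | ⟨haC, h1, h2⟩)
          · exact ⟨hu, le_rfl, huv'⟩
          · exact ⟨haC, le_of_lt (lt_of_lt_of_le hlt h1), h2⟩
      have hnotin : u ∉ C.filter (fun a => nxt C u ≤ a ∧ a < v) := by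
        rw [Finset.mem_filter]
        rintro ⟨-, h1, -⟩
        linarith
      have hcard' : (C.filter (fun a => nxt C u ≤ a ∧ a < v)).card ≤ n := by
        have : (C.filter (fun a => u ≤ a ∧ a < v)).card
            = (C.filter (fun a => nxt C u ≤ a ∧ a < v)).card + 1 := by
          rw [setEq, Finset.card_insert_of_notMem hnotin]
        omega
      rw [setEq, Finset.sum_insert hnotin, ih (nxt C u) v hmem hv hle hcard']
      ring
    · have : u = v := le_antisymm huv (not_lt.1 huv')
      subst this
      rw [Finset.filter_false_of_mem (fun a _ h => by exact absurd (lt_of_le_of_lt h.1 h.2) (lt_irrefl u))]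
      simp

end Tele

end StablePoly
namespace StablePoly

open Finset
open Classical

variable {I J : Type}

section Main

variable (G : PrefSystem I J)

/-- a generic helper: an indicator sum over a set meeting a predicate at most once -/
lemma sum_indicator_le_one {α : Type*} (s : Finset α) (p : α → Prop) [DecidablePred p]
    (h : ∀ a ∈ s, ∀ b ∈ s, p a → p b → a = b) :
    ∑ a ∈ s, (if p a then (1:ℝ) else 0) ≤ 1 := by
  classical
  by_cases hex : ∃ a ∈ s, p a
  · obtain ⟨a0, ha0, hpa0⟩ := hex
    calc ∑ a ∈ s, (if p a then (1:ℝ) else 0)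
        ≤ ∑ a ∈ s, (if a = a0 then (1:ℝ) else 0) := by
          refine Finset.sum_le_sum fun a ha => ?_
          by_cases hp : p a
          · rw [if_pos hp, if_pos (h a ha a0 ha0 hp hpa0)]
          · rw [if_neg hp]
            by_cases he : a = a0 <;> simp [he]
      _ = 1 := by rw [Finset.sum_ite_eq' s a0 (fun _ => (1:ℝ)), if_pos ha0]
  · push_neg at hex
    have : ∑ a ∈ s, (if p a then (1:ℝ) else 0) = 0 :=
      Finset.sum_eq_zero fun a ha => if_neg (hex a ha)
    rw [this]; exact zero_le_one

/-- the easy direction: characteristic vectors of stable matchings satisfy the constraints -/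
lemma stable_char_good [DecidableEq I] [DecidableEq J] {M : Finset (I × J)}
    (hM : IsStable G M) :
    Good G (fun e => if e ∈ M then (1 : ℝ) else 0) := by
  obtain ⟨⟨hME, hmatch⟩, hstab⟩ := hM
  constructor
  · intro e; by_cases h : e ∈ M <;> simp [h]
  · intro e he; rw [if_neg (fun h => he (hME h))]
  · intro m
    refine sum_indicator_le_one (deltaI G m) (· ∈ M) ?_
    intro a ha b hb haM hbM
    by_contra hab
    exact (hmatch a haM b hbM hab).1
      (((mem_deltaI G).1 ha).2.trans ((mem_deltaI G).1 hb).2.symm)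
  · intro w
    refine sum_indicator_le_one (deltaJ G w) (· ∈ M) ?_
    intro a ha b hb haM hbM
    by_contra hab
    exact (hmatch a haM b hbM hab).2
      (((mem_deltaJ G).1 ha).2.trans ((mem_deltaJ G).1 hb).2.symm)
  · intro e he
    have hnn : ∀ f ∈ gammaSet G e, (0:ℝ) ≤ (if f ∈ M then (1:ℝ) else 0) := by
      intro f _; by_cases h : f ∈ M <;> simp [h]
    obtain ⟨f, hfγ, hfM⟩ : ∃ f ∈ gammaSet G e, f ∈ M := by
      by_cases heM : e ∈ M
      · exact ⟨e, (mem_gammaSet G).2 ⟨he, Or.inl rfl⟩, heM⟩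
      · have hnb := hstab e
        have hnc : ¬ ((∀ f ∈ M, f.1 = e.1 → G.pI e.1 e f) ∧
            (∀ f ∈ M, f.2 = e.2 → G.pJ e.2 e f)) :=
          fun hc => hnb ⟨he, heM, hc.1, hc.2⟩
        rcases not_and_or.1 hnc with h | h
        · push_neg at h
          obtain ⟨f, hfM, hf1, hnp⟩ := h
          have hfe : e ≠ f := fun hh => heM (hh ▸ hfM)
          rcases G.pI_total e.1 e f he (hME hfM) rfl hf1 hfe with hp | hp
          · exact absurd hp hnp
          · exact ⟨f, (mem_gammaSet G).2 ⟨hME hfM, Or.inr (Or.inl ⟨hf1, hp⟩)⟩, hfM⟩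
        · push_neg at h
          obtain ⟨f, hfM, hf2, hnp⟩ := h
          have hfe : e ≠ f := fun hh => heM (hh ▸ hfM)
          rcases G.pJ_total e.2 e f he (hME hfM) rfl hf2 hfe with hp | hp
          · exact absurd hp hnp
          · exact ⟨f, (mem_gammaSet G).2 ⟨hME hfM, Or.inr (Or.inr ⟨hf2, hp⟩)⟩, hfM⟩
    calc (1:ℝ) = (if f ∈ M then (1:ℝ) else 0) := by rw [if_pos hfM]
      _ ≤ ∑ g ∈ gammaSet G e, (if g ∈ M then (1:ℝ) else 0) :=
          Finset.single_le_sum hnn hfγ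

variable {G}

/-- the hard direction -/
lemma good_mem_hull [Fintype I] [Fintype J] [DecidableEq I] [DecidableEq J]
    {x : (I × J) → ℝ} (hg : Good G x) : x ∈ stablePolytope G := by
  set S : Set ((I × J) → ℝ) := {y : (I × J) → ℝ |
    ∃ M : Finset (I × J), IsStable G M ∧ y = fun e => if e ∈ M then (1 : ℝ) else 0} with hS
  set C : Finset ℝ := insert (0:ℝ) (insert 1
    ((G.E.image (sfun G x)) ∪ (G.E.image (fun e => sfun G x e + x e)))) with hC
  have h0C : (0:ℝ) ∈ C := Finset.mem_insert_self _ _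
  have h1C : (1:ℝ) ∈ C := Finset.mem_insert_of_mem (Finset.mem_insert_self _ _)
  have hsC : ∀ e ∈ G.E, sfun G x e ∈ C := fun e he =>
    Finset.mem_insert_of_mem (Finset.mem_insert_of_mem
      (Finset.mem_union_left _ (Finset.mem_image_of_mem _ he)))
  have hsxC : ∀ e ∈ G.E, sfun G x e + x e ∈ C := fun e he =>
    Finset.mem_insert_of_mem (Finset.mem_insert_of_mem
      (Finset.mem_union_right _ (Finset.mem_image_of_mem _ he)))
  have hCnn : ∀ a ∈ C, 0 ≤ a := by
    intro a ha
    rcases Finset.mem_insert.1 ha with rfl | ha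
    · exact le_rfl
    rcases Finset.mem_insert.1 ha with rfl | ha
    · exact zero_le_one
    rcases Finset.mem_union.1 ha with ha | ha
    · obtain ⟨e, he, rfl⟩ := Finset.mem_image.1 ha
      exact sfun_nonneg hg e
    · obtain ⟨e, he, rfl⟩ := Finset.mem_image.1 ha
      exact add_nonneg (sfun_nonneg hg e) (hg.nonneg e)
  set D : Finset ℝ := C.filter (fun a => a < 1) with hD
  set w : ℝ → ℝ := fun a => nxt C a - a with hw
  set y : ℝ → ((I × J) → ℝ) := fun a => (fun e' => if e' ∈ Mset G x a then (1:ℝ) else 0)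
    with hy
  have hDmem : ∀ a ∈ D, 0 ≤ a ∧ a < 1 := by
    intro a ha
    rw [hD, Finset.mem_filter] at ha
    exact ⟨hCnn a ha.1, ha.2⟩
  have hwpos : ∀ a ∈ D, 0 ≤ w a := by
    intro a ha
    rw [hD, Finset.mem_filter] at ha
    have := (nxt_spec h1C ha.2).1
    rw [hw]; dsimp only; linarith
  have hsum1 : ∑ a ∈ D, w a = 1 := by
    have hDeq : D = C.filter (fun a => 0 ≤ a ∧ a < 1) := by
      ext a
      rw [hD, Finset.mem_filter, Finset.mem_filter]
      exact ⟨fun h => ⟨h.1, hCnn a h.1, h.2⟩, fun h => ⟨h.1, h.2.2⟩⟩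
    rw [hDeq]
    have := tele C (C.filter (fun a => (0:ℝ) ≤ a ∧ a < 1)).card 0 1 h0C h1C zero_le_one le_rfl
    rw [this]; norm_num
  have hxdecomp : x = ∑ a ∈ D, w a • y a := by
    funext e'
    rw [Finset.sum_apply]
    have step : ∀ a ∈ D, (w a • y a) e' = if e' ∈ Mset G x a then w a else 0 := by
      intro a _
      rw [hy]
      dsimp only [Pi.smul_apply, smul_eq_mul]
      by_cases h : e' ∈ Mset G x a
      · rw [if_pos h, if_pos h, mul_one]
      · rw [if_neg h, if_neg h, mul_zero]
    rw [Finset.sum_congr rfl step, ← Finset.sum_filter]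
    by_cases he' : e' ∈ G.E
    · have hfeq : D.filter (fun a => e' ∈ Mset G x a)
          = C.filter (fun a => sfun G x e' ≤ a ∧ a < sfun G x e' + x e') := by
        ext a
        simp only [hD, Finset.mem_filter]
        constructor
        · rintro ⟨⟨haC, _⟩, haM⟩
          have := (mem_Mset).1 haM
          exact ⟨haC, this.2.1, this.2.2⟩
        · rintro ⟨haC, h1, h2⟩
          have ha1 : a < 1 := lt_of_lt_of_le h2 (sfun_add_le_one hg he')
          exact ⟨⟨haC, ha1⟩, (mem_Mset).2 ⟨he', h1, h2⟩⟩
      rw [hfeq]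
      have := tele C (C.filter (fun a => sfun G x e' ≤ a ∧ a < sfun G x e' + x e')).card
        (sfun G x e') (sfun G x e' + x e') (hsC e' he') (hsxC e' he')
        (by linarith [hg.nonneg e']) le_rfl
      rw [this]; ring
    · have hfeq : D.filter (fun a => e' ∈ Mset G x a) = ∅ := by
        rw [Finset.filter_eq_empty_iff]
        intro a _
        intro hmem
        exact he' ((mem_Mset).1 hmem).1
      rw [hfeq, Finset.sum_empty, hg.offE e' he']
  have hz : ∀ a ∈ D, y a ∈ S := by
    intro a ha
    exact ⟨Mset G x a, Mset_stable hg (hDmem a ha).1 (hDmem a ha).2, rfl⟩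
  have hmem := Finset.centerMass_mem_convexHull D hwpos (by rw [hsum1]; norm_num) hz
  rw [Finset.centerMass_eq_of_sum_1 _ _ hsum1, ← hxdecomp] at hmem
  exact hmem

end Main

end StablePoly
/-- `x ∈ ℝ^E` belongs to the stable matching polytope iff
`x ≥ 0`, `x(δ(v)) ≤ 1` for every vertex `v`, and `x(γ(e)) ≥ 1` for every
edge `e ∈ E`. -/
theorem stable_matching_polytope_description {I J : Type} [Fintype I] [Fintype J]
    [DecidableEq I] [DecidableEq J] (G : PrefSystem I J) (x : (I × J) → ℝ) :
    x ∈ stablePolytope G ↔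
      ((∀ e, 0 ≤ x e) ∧ (∀ e, e ∉ G.E → x e = 0) ∧
       (∀ m : I, ∑ e ∈ deltaI G m, x e ≤ 1) ∧
       (∀ w : J, ∑ e ∈ deltaJ G w, x e ≤ 1) ∧
       (∀ e ∈ G.E, 1 ≤ ∑ f ∈ gammaSet G e, x f)) := by
  constructor
  · -- forward: every point of the hull satisfies the (linear) constraints
    intro hx
    set P : Set ((I × J) → ℝ) := {z : (I × J) → ℝ |
      (∀ e, 0 ≤ z e) ∧ (∀ e, e ∉ G.E → z e = 0) ∧
      (∀ m : I, ∑ e ∈ deltaI G m, z e ≤ 1) ∧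
      (∀ w : J, ∑ e ∈ deltaJ G w, z e ≤ 1) ∧
      (∀ e ∈ G.E, 1 ≤ ∑ f ∈ gammaSet G e, z f)} with hP
    have hPconv : Convex ℝ P := by
      rintro z1 ⟨h1a, h1b, h1c, h1d, h1e⟩ z2 ⟨h2a, h2b, h2c, h2d, h2e⟩ a b ha hb hab
      have happ : ∀ e, (a • z1 + b • z2) e = a * z1 e + b * z2 e := fun e => rfl
      refine ⟨fun e => ?_, fun e he => ?_, fun m => ?_, fun w => ?_, fun e he => ?_⟩
      · rw [happ e]
        exact add_nonneg (mul_nonneg ha (h1a e)) (mul_nonneg hb (h2a e))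
      · rw [happ e, h1b e he, h2b e he]; ring
      · calc ∑ e ∈ deltaI G m, (a • z1 + b • z2) e
            = a * ∑ e ∈ deltaI G m, z1 e + b * ∑ e ∈ deltaI G m, z2 e := by
              rw [Finset.mul_sum, Finset.mul_sum, ← Finset.sum_add_distrib]
              exact Finset.sum_congr rfl fun f _ => happ f
          _ ≤ a * 1 + b * 1 := by
              have := h1c m; have := h2c m
              have : a * ∑ e ∈ deltaI G m, z1 e ≤ a * 1 := mul_le_mul_of_nonneg_left (h1c m) ha
              have : b * ∑ e ∈ deltaI G m, z2 e ≤ b * 1 := mul_le_mul_of_nonneg_left (h2c m) hb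
              linarith [mul_le_mul_of_nonneg_left (h1c m) ha,
                mul_le_mul_of_nonneg_left (h2c m) hb]
          _ = 1 := by rw [mul_one, mul_one]; exact hab
      · calc ∑ e ∈ deltaJ G w, (a • z1 + b • z2) e
            = a * ∑ e ∈ deltaJ G w, z1 e + b * ∑ e ∈ deltaJ G w, z2 e := by
              rw [Finset.mul_sum, Finset.mul_sum, ← Finset.sum_add_distrib]
              exact Finset.sum_congr rfl fun f _ => happ f
          _ ≤ a * 1 + b * 1 := by
              linarith [mul_le_mul_of_nonneg_left (h1d w) ha,
                mul_le_mul_of_nonneg_left (h2d w) hb]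
          _ = 1 := by rw [mul_one, mul_one]; exact hab
      · calc (1:ℝ) = a * 1 + b * 1 := by rw [mul_one, mul_one]; exact hab.symm
          _ ≤ a * ∑ f ∈ gammaSet G e, z1 f + b * ∑ f ∈ gammaSet G e, z2 f := by
              linarith [mul_le_mul_of_nonneg_left (h1e e he) ha,
                mul_le_mul_of_nonneg_left (h2e e he) hb]
          _ = ∑ f ∈ gammaSet G e, (a • z1 + b • z2) f := by
              rw [Finset.mul_sum, Finset.mul_sum, ← Finset.sum_add_distrib]
              exact Finset.sum_congr rfl fun f _ => (happ f).symm
    have hSP : {y : (I × J) → ℝ |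
        ∃ M : Finset (I × J), IsStable G M ∧ y = fun e => if e ∈ M then (1 : ℝ) else 0} ⊆ P := by
      rintro y ⟨M, hM, rfl⟩
      have hgood := StablePoly.stable_char_good G hM
      exact ⟨fun e => hgood.nonneg e, fun e he => hgood.offE e he, fun m => hgood.dI m,
        fun w => hgood.dJ w, fun e he => hgood.gam e he⟩
    exact convexHull_min hSP hPconv hx
  · rintro ⟨h1, h2, h3, h4, h5⟩
    exact StablePoly.good_mem_hull ⟨h1, h2, h3, h4, h5⟩
end

section
/- If x is a point of the stable matching polytope of a bipartite graph and e = mw is an edge with x(e) > 0, then x(δ(m)) = x(δ(w)) = x(γ(e)) = 1. -/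
variable {I J : Type}

section helpers
variable {G : PrefSystem I J} {M M' : Finset (I × J)}

lemma pI_asymm {m : I} {e f : I × J} (h : G.pI m e f) : ¬ G.pI m f e :=
  fun h' => G.pI_irrefl m e (G.pI_trans m e f e h h')

lemma pJ_asymm {w : J} {e f : I × J} (h : G.pJ w e f) : ¬ G.pJ w f e :=
  fun h' => G.pJ_irrefl w e (G.pJ_trans w e f e h h')

lemma unique_I (hM : IsMatching G M) {e f : I × J} (he : e ∈ M) (hf : f ∈ M)
    (h : e.1 = f.1) : e = f := by
  by_contra hne; exact (hM.2 e he f hf hne).1 h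

lemma unique_J (hM : IsMatching G M) {e f : I × J} (he : e ∈ M) (hf : f ∈ M)
    (h : e.2 = f.2) : e = f := by
  by_contra hne; exact (hM.2 e he f hf hne).2 h

/-- Chain lemma, woman-start version: if `e ∈ M \ M'` and the woman of `e`
is matched in `M'` to an edge she prefers to `e`, then the man of `e` is
matched in `M'` to an edge worse (for him) than `e`. -/
lemma chainW [Fintype I] [Fintype J] (hM : IsStable G M) (hM' : IsStable G M')
    {e : I × J} (heM : e ∈ M) (heM' : e ∉ M')
    (hg : ∃ g ∈ M', g.2 = e.2 ∧ G.pJ e.2 g e) :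
    ∃ f ∈ M', f.1 = e.1 ∧ G.pI e.1 e f := by
  classical
  set P : I × J → Prop := fun p => p ∈ M ∧ p ∉ M' ∧ ∃ g ∈ M', g.2 = p.2 ∧ G.pJ p.2 g p
    with hP
  have step : ∀ p, P p → ∃ q, P q ∧ ∃ g ∈ M', g.1 = q.1 ∧ g.2 = p.2 ∧ G.pI q.1 q g := by
    rintro p ⟨hpM, hpM', g, hgM', hg2, hgp⟩
    have hgE : g ∈ G.E := hM'.1.1 hgM'
    have hgp_ne : g ≠ p := fun h => hpM' (h ▸ hgM')
    have hgM : g ∉ M := fun h => (hM.1.2 g h p hpM hgp_ne).2 hg2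
    have condJ : ∀ f ∈ M, f.2 = g.2 → G.pJ g.2 g f := by
      intro f hf hf2
      have : f = p := unique_J hM.1 hf hpM (by rw [hf2, hg2])
      subst this
      rw [hg2]; exact hgp
    have hnc : ¬ (∀ f ∈ M, f.1 = g.1 → G.pI g.1 g f) :=
      fun hc => hM.2 g ⟨hgE, hgM, hc, condJ⟩
    push_neg at hnc
    obtain ⟨q, hqM, hq1, hqn⟩ := hnc
    have hqE : q ∈ G.E := hM.1.1 hqM
    have hqg_ne : q ≠ g := fun h => hgM (h ▸ hqM)
    have hqg : G.pI g.1 q g := by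
      rcases G.pI_total g.1 q g hqE hgE hq1 rfl hqg_ne with h | h
      · exact h
      · exact absurd h hqn
    have hqM' : q ∉ M' := by
      intro h
      exact hqg_ne (unique_I hM'.1 h hgM' hq1)
    -- q does not block M'
    have condI' : ∀ f ∈ M', f.1 = q.1 → G.pI q.1 q f := by
      intro f hf hf1
      have : f = g := unique_I hM'.1 hf hgM' (by rw [hf1, hq1])
      subst this
      rw [hq1]; exact hqg
    have hnc' : ¬ (∀ f ∈ M', f.2 = q.2 → G.pJ q.2 q f) :=
      fun hc => hM'.2 q ⟨hqE, hqM', condI', hc⟩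
    push_neg at hnc'
    obtain ⟨g', hg'M', hg'2, hg'n⟩ := hnc'
    have hg'E : g' ∈ G.E := hM'.1.1 hg'M'
    have hg'ne : g' ≠ q := fun h => hqM' (h ▸ hg'M')
    have hg'q : G.pJ q.2 g' q := by
      rcases G.pJ_total q.2 g' q hg'E hqE hg'2 rfl hg'ne with h | h
      · exact h
      · exact absurd h hg'n
    refine ⟨q, ⟨hqM, hqM', g', hg'M', hg'2, hg'q⟩, g, hgM', hq1.symm, hg2, ?_⟩
    rw [hq1]; exact hqg
  -- the step as a function
  let F : I × J → I × J := fun p => if h : P p then (step p h).choose else p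
  have hF : ∀ p (h : P p), P (F p) ∧
      ∃ g ∈ M', g.1 = (F p).1 ∧ g.2 = p.2 ∧ G.pI (F p).1 (F p) g := by
    intro p h
    simp only [F, dif_pos h]
    exact (step p h).choose_spec
  -- injectivity and surjectivity on the finite set of P-edges
  let S : Finset (I × J) := Finset.univ.filter P
  have hmem : ∀ p : I × J, p ∈ S ↔ P p := by
    intro p; simp [S]
  have hmaps : ∀ p (hp : p ∈ S), F p ∈ S := by
    intro p hp; exact (hmem _).2 (hF p ((hmem _).1 hp)).1
  have hinj : ∀ p q (hp : p ∈ S) (hq : q ∈ S), F p = F q → p = q := by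
    intro p q hp hq hpq
    have hp' := (hmem _).1 hp
    have hq' := (hmem _).1 hq
    obtain ⟨gp, hgpM', hgp1, hgp2, -⟩ := (hF p hp').2
    obtain ⟨gq, hgqM', hgq1, hgq2, -⟩ := (hF q hq').2
    have : gp = gq := unique_I hM'.1 hgpM' hgqM' (by rw [hgp1, hgq1, hpq])
    have h2 : p.2 = q.2 := by rw [← hgp2, this, hgq2]
    exact unique_J hM.1 hp'.1 hq'.1 h2
  have hPe : P e := ⟨heM, heM', hg⟩
  obtain ⟨p, hp, hpe⟩ := Finset.surj_on_of_inj_on_of_card_le (fun a _ => F a)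
    hmaps hinj le_rfl e ((hmem _).2 hPe)
  obtain ⟨g, hgM', hg1, hg2, hgpref⟩ := (hF p ((hmem _).1 hp)).2
  rw [← hpe] at hg1 hgpref
  exact ⟨g, hgM', hg1, hgpref⟩
end helpers

section helpers2
variable {G : PrefSystem I J} {M M' : Finset (I × J)}

/-- Chain lemma, man-start version. -/
lemma chainM [Fintype I] [Fintype J] (hM : IsStable G M) (hM' : IsStable G M')
    {e : I × J} (heM : e ∈ M) (heM' : e ∉ M')
    (hg : ∃ f ∈ M', f.1 = e.1 ∧ G.pI e.1 f e) :
    ∃ g ∈ M', g.2 = e.2 ∧ G.pJ e.2 e g := by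
  classical
  set P : I × J → Prop := fun p => p ∈ M ∧ p ∉ M' ∧ ∃ g ∈ M', g.1 = p.1 ∧ G.pI p.1 g p
    with hP
  have step : ∀ p, P p → ∃ q, P q ∧ ∃ g ∈ M', g.2 = q.2 ∧ g.1 = p.1 ∧ G.pJ q.2 q g := by
    rintro p ⟨hpM, hpM', g, hgM', hg1, hgp⟩
    have hgE : g ∈ G.E := hM'.1.1 hgM'
    have hgp_ne : g ≠ p := fun h => hpM' (h ▸ hgM')
    have hgM : g ∉ M := fun h => (hM.1.2 g h p hpM hgp_ne).1 hg1
    have condI : ∀ f ∈ M, f.1 = g.1 → G.pI g.1 g f := by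
      intro f hf hf1
      have : f = p := unique_I hM.1 hf hpM (by rw [hf1, hg1])
      subst this
      rw [hg1]; exact hgp
    have hnc : ¬ (∀ f ∈ M, f.2 = g.2 → G.pJ g.2 g f) :=
      fun hc => hM.2 g ⟨hgE, hgM, condI, hc⟩
    push_neg at hnc
    obtain ⟨q, hqM, hq2, hqn⟩ := hnc
    have hqE : q ∈ G.E := hM.1.1 hqM
    have hqg_ne : q ≠ g := fun h => hgM (h ▸ hqM)
    have hqg : G.pJ g.2 q g := by
      rcases G.pJ_total g.2 q g hqE hgE hq2 rfl hqg_ne with h | h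
      · exact h
      · exact absurd h hqn
    have hqM' : q ∉ M' := by
      intro h
      exact hqg_ne (unique_J hM'.1 h hgM' hq2)
    have condJ' : ∀ f ∈ M', f.2 = q.2 → G.pJ q.2 q f := by
      intro f hf hf2
      have : f = g := unique_J hM'.1 hf hgM' (by rw [hf2, hq2])
      subst this
      rw [hq2]; exact hqg
    have hnc' : ¬ (∀ f ∈ M', f.1 = q.1 → G.pI q.1 q f) :=
      fun hc => hM'.2 q ⟨hqE, hqM', hc, condJ'⟩
    push_neg at hnc'
    obtain ⟨g', hg'M', hg'1, hg'n⟩ := hnc'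
    have hg'E : g' ∈ G.E := hM'.1.1 hg'M'
    have hg'ne : g' ≠ q := fun h => hqM' (h ▸ hg'M')
    have hg'q : G.pI q.1 g' q := by
      rcases G.pI_total q.1 g' q hg'E hqE hg'1 rfl hg'ne with h | h
      · exact h
      · exact absurd h hg'n
    refine ⟨q, ⟨hqM, hqM', g', hg'M', hg'1, hg'q⟩, g, hgM', hq2.symm, hg1, ?_⟩
    rw [hq2]; exact hqg
  let F : I × J → I × J := fun p => if h : P p then (step p h).choose else p
  have hF : ∀ p (h : P p), P (F p) ∧
      ∃ g ∈ M', g.2 = (F p).2 ∧ g.1 = p.1 ∧ G.pJ (F p).2 (F p) g := by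
    intro p h
    simp only [F, dif_pos h]
    exact (step p h).choose_spec
  let S : Finset (I × J) := Finset.univ.filter P
  have hmem : ∀ p : I × J, p ∈ S ↔ P p := by
    intro p; simp [S]
  have hmaps : ∀ p (hp : p ∈ S), F p ∈ S := by
    intro p hp; exact (hmem _).2 (hF p ((hmem _).1 hp)).1
  have hinj : ∀ p q (hp : p ∈ S) (hq : q ∈ S), F p = F q → p = q := by
    intro p q hp hq hpq
    have hp' := (hmem _).1 hp
    have hq' := (hmem _).1 hq
    obtain ⟨gp, hgpM', hgp2, hgp1, -⟩ := (hF p hp').2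
    obtain ⟨gq, hgqM', hgq2, hgq1, -⟩ := (hF q hq').2
    have : gp = gq := unique_J hM'.1 hgpM' hgqM' (by rw [hgp2, hgq2, hpq])
    have h1 : p.1 = q.1 := by rw [← hgp1, this, hgq1]
    exact unique_I hM.1 hp'.1 hq'.1 h1
  have hPe : P e := ⟨heM, heM', hg⟩
  obtain ⟨p, hp, hpe⟩ := Finset.surj_on_of_inj_on_of_card_le (fun a _ => F a)
    hmaps hinj le_rfl e ((hmem _).2 hPe)
  obtain ⟨g, hgM', hg2, hg1, hgpref⟩ := (hF p ((hmem _).1 hp)).2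
  rw [← hpe] at hg2 hgpref
  exact ⟨g, hgM', hg2, hgpref⟩

variable [Fintype I] [Fintype J]

/-- If `e ∈ M` with `M, M'` stable, then the man of `e` is covered by `M'`. -/
lemma covered_I (hM : IsStable G M) (hM' : IsStable G M') {e : I × J} (heM : e ∈ M) :
    ∃ f ∈ M', f.1 = e.1 := by
  classical
  by_cases heM' : e ∈ M'
  · exact ⟨e, heM', rfl⟩
  by_contra h
  push_neg at h
  have condI : ∀ f ∈ M', f.1 = e.1 → G.pI e.1 e f := fun f hf hf1 => absurd hf1 (h f hf)
  have heE : e ∈ G.E := hM.1.1 heM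
  have hnc : ¬ (∀ f ∈ M', f.2 = e.2 → G.pJ e.2 e f) :=
    fun hc => hM'.2 e ⟨heE, heM', condI, hc⟩
  push_neg at hnc
  obtain ⟨g, hgM', hg2, hgn⟩ := hnc
  have hgE : g ∈ G.E := hM'.1.1 hgM'
  have hgne : g ≠ e := fun hq => heM' (hq ▸ hgM')
  have hge : G.pJ e.2 g e := by
    rcases G.pJ_total e.2 g e hgE heE hg2 rfl hgne with h' | h'
    · exact h'
    · exact absurd h' hgn
  obtain ⟨f, hfM', hf1, -⟩ := chainW hM hM' heM heM' ⟨g, hgM', hg2, hge⟩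
  exact h f hfM' hf1

/-- If `e ∈ M` with `M, M'` stable, then the woman of `e` is covered by `M'`. -/
lemma covered_J (hM : IsStable G M) (hM' : IsStable G M') {e : I × J} (heM : e ∈ M) :
    ∃ g ∈ M', g.2 = e.2 := by
  classical
  by_cases heM' : e ∈ M'
  · exact ⟨e, heM', rfl⟩
  by_contra h
  push_neg at h
  have condJ : ∀ f ∈ M', f.2 = e.2 → G.pJ e.2 e f := fun f hf hf2 => absurd hf2 (h f hf)
  have heE : e ∈ G.E := hM.1.1 heM
  have hnc : ¬ (∀ f ∈ M', f.1 = e.1 → G.pI e.1 e f) :=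
    fun hc => hM'.2 e ⟨heE, heM', hc, condJ⟩
  push_neg at hnc
  obtain ⟨f, hfM', hf1, hfn⟩ := hnc
  have hfE : f ∈ G.E := hM'.1.1 hfM'
  have hfne : f ≠ e := fun hq => heM' (hq ▸ hfM')
  have hfe : G.pI e.1 f e := by
    rcases G.pI_total e.1 f e hfE heE hf1 rfl hfne with h' | h'
    · exact h'
    · exact absurd h' hfn
  obtain ⟨g, hgM', hg2, -⟩ := chainM hM hM' heM heM' ⟨f, hfM', hf1, hfe⟩
  exact h g hgM' hg2
end helpers2

section singletons
variable {G : PrefSystem I J} {M M' : Finset (I × J)} [Fintype I] [Fintype J]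
  [DecidableEq I] [DecidableEq J]

lemma deltaI_filter (hM : IsStable G M) (hM' : IsStable G M') {e : I × J} (heM : e ∈ M) :
    ∃ f, (deltaI G e.1).filter (· ∈ M') = {f} := by
  classical
  obtain ⟨f, hfM', hf1⟩ := covered_I hM hM' heM
  refine ⟨f, Finset.eq_singleton_iff_unique_mem.2 ⟨?_, ?_⟩⟩
  · simp only [Finset.mem_filter, deltaI]
    exact ⟨⟨hM'.1.1 hfM', hf1⟩, hfM'⟩
  · intro h hh
    simp only [Finset.mem_filter, deltaI] at hh
    exact unique_I hM'.1 hh.2 hfM' (hh.1.2.trans hf1.symm)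

lemma deltaJ_filter (hM : IsStable G M) (hM' : IsStable G M') {e : I × J} (heM : e ∈ M) :
    ∃ f, (deltaJ G e.2).filter (· ∈ M') = {f} := by
  classical
  obtain ⟨f, hfM', hf2⟩ := covered_J hM hM' heM
  refine ⟨f, Finset.eq_singleton_iff_unique_mem.2 ⟨?_, ?_⟩⟩
  · simp only [Finset.mem_filter, deltaJ]
    exact ⟨⟨hM'.1.1 hfM', hf2⟩, hfM'⟩
  · intro h hh
    simp only [Finset.mem_filter, deltaJ] at hh
    exact unique_J hM'.1 hh.2 hfM' (hh.1.2.trans hf2.symm)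

lemma gamma_filter (hM : IsStable G M) (hM' : IsStable G M') {e : I × J} (heM : e ∈ M) :
    ∃ f, (gammaSet G e).filter (· ∈ M') = {f} := by
  classical
  have heE : e ∈ G.E := hM.1.1 heM
  by_cases heM' : e ∈ M'
  · refine ⟨e, Finset.eq_singleton_iff_unique_mem.2 ⟨?_, ?_⟩⟩
    · simp only [Finset.mem_filter, gammaSet]
      exact ⟨⟨heE, Or.inl trivial⟩, heM'⟩
    · intro h hh
      simp only [Finset.mem_filter, gammaSet] at hh
      rcases hh.1.2 with h1 | ⟨h1, -⟩ | ⟨h1, -⟩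
      · exact h1
      · exact unique_I hM'.1 hh.2 heM' h1
      · exact unique_J hM'.1 hh.2 heM' h1
  · obtain ⟨f, hfM', hf1⟩ := covered_I hM hM' heM
    obtain ⟨g, hgM', hg2⟩ := covered_J hM hM' heM
    have hfE : f ∈ G.E := hM'.1.1 hfM'
    have hgE : g ∈ G.E := hM'.1.1 hgM'
    have hfne : f ≠ e := fun h => heM' (h ▸ hfM')
    have hgne : g ≠ e := fun h => heM' (h ▸ hgM')
    have hone : G.pI e.1 f e ∨ G.pJ e.2 g e := by
      by_contra hc
      push_neg at hc
      have hef : G.pI e.1 e f := by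
        rcases G.pI_total e.1 f e hfE heE hf1 rfl hfne with h' | h'
        · exact absurd h' hc.1
        · exact h'
      have heg : G.pJ e.2 e g := by
        rcases G.pJ_total e.2 g e hgE heE hg2 rfl hgne with h' | h'
        · exact absurd h' hc.2
        · exact h'
      refine hM'.2 e ⟨heE, heM', ?_, ?_⟩
      · intro h hh hh1
        have : h = f := unique_I hM'.1 hh hfM' (hh1.trans hf1.symm)
        subst this; exact hef
      · intro h hh hh2
        have : h = g := unique_J hM'.1 hh hgM' (hh2.trans hg2.symm)
        subst this; exact heg
    rcases hone with hfe | hge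
    · -- the man prefers f to e; then the woman does not prefer g to e
      have hng : ¬ G.pJ e.2 g e := by
        intro hge
        obtain ⟨f', hf'M', hf'1, hf'pref⟩ := chainW hM hM' heM heM' ⟨g, hgM', hg2, hge⟩
        have : f' = f := unique_I hM'.1 hf'M' hfM' (hf'1.trans hf1.symm)
        subst this
        exact pI_asymm hf'pref hfe
      refine ⟨f, Finset.eq_singleton_iff_unique_mem.2 ⟨?_, ?_⟩⟩
      · simp only [Finset.mem_filter, gammaSet]
        exact ⟨⟨hfE, Or.inr (Or.inl ⟨hf1, hfe⟩)⟩, hfM'⟩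
      · intro h hh
        simp only [Finset.mem_filter, gammaSet] at hh
        rcases hh.1.2 with h1 | ⟨h1, -⟩ | ⟨h1, h2⟩
        · exact absurd (h1 ▸ hh.2) heM'
        · exact unique_I hM'.1 hh.2 hfM' (h1.trans hf1.symm)
        · have : h = g := unique_J hM'.1 hh.2 hgM' (h1.trans hg2.symm)
          subst this; exact absurd h2 hng
    · -- the woman prefers g; then the man does not prefer f
      have hnf : ¬ G.pI e.1 f e := by
        obtain ⟨f', hf'M', hf'1, hf'pref⟩ := chainW hM hM' heM heM' ⟨g, hgM', hg2, hge⟩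
        have : f' = f := unique_I hM'.1 hf'M' hfM' (hf'1.trans hf1.symm)
        subst this
        exact pI_asymm hf'pref
      refine ⟨g, Finset.eq_singleton_iff_unique_mem.2 ⟨?_, ?_⟩⟩
      · simp only [Finset.mem_filter, gammaSet]
        exact ⟨⟨hgE, Or.inr (Or.inr ⟨hg2, hge⟩)⟩, hgM'⟩
      · intro h hh
        simp only [Finset.mem_filter, gammaSet] at hh
        rcases hh.1.2 with h1 | ⟨h1, h2⟩ | ⟨h1, -⟩
        · exact absurd (h1 ▸ hh.2) heM'
        · have : h = f := unique_I hM'.1 hh.2 hfM' (h1.trans hf1.symm)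
          subst this; exact absurd h2 hnf
        · exact unique_J hM'.1 hh.2 hgM' (h1.trans hg2.symm)

lemma sum_indicator_eq_one {D M' : Finset (I × J)}
    (h : ∃ f, D.filter (· ∈ M') = {f}) :
    (∑ f ∈ D, (if f ∈ M' then (1 : ℝ) else 0)) = 1 := by
  classical
  obtain ⟨f, hf⟩ := h
  rw [← Finset.sum_filter, hf, Finset.sum_singleton]
end singletons

/-- if `x` is a point of the stable matching polytope and
`e = mw` is an edge with `x(e) > 0`, then `x(δ(m)) = x(δ(w)) = x(γ(e)) = 1`. -/
theorem positive_edge_tight {I J : Type} [Fintype I] [Fintype J]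
    [DecidableEq I] [DecidableEq J] (G : PrefSystem I J)
    (x : (I × J) → ℝ) (hx : x ∈ stablePolytope G)
    (e : I × J) (he : e ∈ G.E) (hpos : 0 < x e) :
    (∑ f ∈ deltaI G e.1, x f) = 1 ∧
    (∑ f ∈ deltaJ G e.2, x f) = 1 ∧
    (∑ f ∈ gammaSet G e, x f) = 1 := by
  classical
  rw [stablePolytope, convexHull_eq] at hx
  obtain ⟨ι, t, w, z, hw0, hw1, hz, hcm⟩ := hx
  rw [Finset.centerMass_eq_of_sum_1 _ _ hw1] at hcm
  choose Ms hMs hzs using hz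
  set A := t.attach with hA
  set W : {i // i ∈ t} → ℝ := fun i => w i.1 with hW
  set Mi : {i // i ∈ t} → Finset (I × J) := fun i => Ms i.1 i.2 with hMi
  have hw1' : ∑ i ∈ A, W i = 1 := by
    rw [hA, hW, Finset.sum_attach]; exact hw1
  have hxf : ∀ f, x f = ∑ i ∈ A, W i * (if f ∈ Mi i then 1 else 0) := by
    intro f
    rw [← hcm]
    rw [Finset.sum_apply]
    rw [← Finset.sum_attach t (fun i => (w i • z i) f)]
    refine Finset.sum_congr rfl ?_
    intro i _
    have := hzs i.1 i.2
    simp only [Pi.smul_apply, smul_eq_mul, this, hW, hMi]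
  -- find a positive-weight matching containing e
  have h0 : ∑ _i ∈ A, (0 : ℝ) < ∑ i ∈ A, W i * (if e ∈ Mi i then 1 else 0) := by
    rw [Finset.sum_const_zero, ← hxf e]; exact hpos
  obtain ⟨i0, hi0A, hi0⟩ := Finset.exists_lt_of_sum_lt h0
  have heMi : e ∈ Mi i0 := by
    by_contra h
    simp [h] at hi0
  have hM0 : IsStable G (Mi i0) := hMs i0.1 i0.2
  have key : ∀ D : Finset (I × J),
      (∀ M', IsStable G M' → ∃ f, D.filter (· ∈ M') = {f}) →
      (∑ f ∈ D, x f) = 1 := by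
    intro D hD
    calc ∑ f ∈ D, x f
        = ∑ f ∈ D, ∑ i ∈ A, W i * (if f ∈ Mi i then 1 else 0) :=
          Finset.sum_congr rfl fun f _ => hxf f
      _ = ∑ i ∈ A, ∑ f ∈ D, W i * (if f ∈ Mi i then 1 else 0) := Finset.sum_comm
      _ = ∑ i ∈ A, W i * ∑ f ∈ D, (if f ∈ Mi i then (1 : ℝ) else 0) :=
          Finset.sum_congr rfl fun i _ => (Finset.mul_sum _ _ _).symm
      _ = ∑ i ∈ A, W i := by
          refine Finset.sum_congr rfl fun i _ => ?_
          rcases eq_or_lt_of_le (hw0 i.1 i.2) with h | h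
          · show w i.1 * _ = w i.1; rw [← h, zero_mul]
          · rw [sum_indicator_eq_one (hD (Mi i) (hMs i.1 i.2)), mul_one]
      _ = 1 := hw1'
  exact ⟨key _ (fun M' hM' => deltaI_filter hM0 hM' heMi),
    key _ (fun M' hM' => deltaJ_filter hM0 hM' heMi),
    key _ (fun M' hM' => gamma_filter hM0 hM' heMi)⟩
end

section
/- Median stable matchings: let M₁, …, M_ℓ be stable matchings of a bipartite graph. For each covered vertex m ∈ I, let E_m be the multiset of the ℓ edges {M_i-edge at m : i = 1,…,ℓ} sorted by <_m, and let e_m(k) be its k-th element; define e_w(j) analogously for w ∈ J. Then for every k ∈ {1,…,ℓ}, the set A(k) = {e_m(k) : m covered, m ∈ I} equals {e_w(ℓ−k+1) : w covered, w ∈ J} and is a stable matching of G. -/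
variable {I J : Type}

open Classical in
/-- Number of indices `i` whose `Ms i`-edge at the vertex `e.1 ∈ I` is weakly
preferred (by `e.1`) to `e`. -/
noncomputable def countLeI (G : PrefSystem I J) {ℓ : ℕ}
    (Ms : Fin ℓ → Finset (I × J)) (e : I × J) : ℕ :=
  (Finset.univ.filter
    (fun i : Fin ℓ => ∃ f ∈ Ms i, f.1 = e.1 ∧ (f = e ∨ G.pI e.1 f e))).card

open Classical in
/-- Number of indices `i` whose `Ms i`-edge at `e.1 ∈ I` is strictly preferred to `e`. -/
noncomputable def countLtI (G : PrefSystem I J) {ℓ : ℕ}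
    (Ms : Fin ℓ → Finset (I × J)) (e : I × J) : ℕ :=
  (Finset.univ.filter
    (fun i : Fin ℓ => ∃ f ∈ Ms i, f.1 = e.1 ∧ f ≠ e ∧ G.pI e.1 f e)).card

open Classical in
/-- Number of indices `i` whose `Ms i`-edge at `e.2 ∈ J` is weakly preferred to `e`. -/
noncomputable def countLeJ (G : PrefSystem I J) {ℓ : ℕ}
    (Ms : Fin ℓ → Finset (I × J)) (e : I × J) : ℕ :=
  (Finset.univ.filter
    (fun i : Fin ℓ => ∃ f ∈ Ms i, f.2 = e.2 ∧ (f = e ∨ G.pJ e.2 f e))).card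

open Classical in
/-- Number of indices `i` whose `Ms i`-edge at `e.2 ∈ J` is strictly preferred to `e`. -/
noncomputable def countLtJ (G : PrefSystem I J) {ℓ : ℕ}
    (Ms : Fin ℓ → Finset (I × J)) (e : I × J) : ℕ :=
  (Finset.univ.filter
    (fun i : Fin ℓ => ∃ f ∈ Ms i, f.2 = e.2 ∧ f ≠ e ∧ G.pJ e.2 f e)).card

/-- `e` is the `k`-th element (`1 ≤ k`) of the multiset `E_m` of edges of the
matchings `Ms i` at the vertex `m = e.1`, sorted by `m`'s preference. -/
def IsKthI (G : PrefSystem I J) {ℓ : ℕ}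
    (Ms : Fin ℓ → Finset (I × J)) (k : ℕ) (e : I × J) : Prop :=
  (∃ i, e ∈ Ms i) ∧ countLtI G Ms e < k ∧ k ≤ countLeI G Ms e

/-- `e` is the `j`-th element of the multiset `E_w` at `w = e.2`, sorted by
`w`'s preference. -/
def IsKthJ (G : PrefSystem I J) {ℓ : ℕ}
    (Ms : Fin ℓ → Finset (I × J)) (j : ℕ) (e : I × J) : Prop :=
  (∃ i, e ∈ Ms i) ∧ countLtJ G Ms e < j ∧ j ≤ countLeJ G Ms e

section Helpers

variable (G : PrefSystem I J)

lemma not_blocks_push (M' : Finset (I × J)) (hM' : IsStable G M') (e : I × J)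
    (heE : e ∈ G.E) (hm : ∀ f ∈ M', f.1 = e.1 → G.pI e.1 e f) :
    ∃ f ∈ M', f.2 = e.2 ∧ G.pJ e.2 f e := by
  have hne : e ∉ M' := fun he => G.pI_irrefl e.1 e (hm e he rfl)
  have hb := hM'.2 e
  unfold Blocks at hb
  push_neg at hb
  obtain ⟨f, hf, hf2, hnp⟩ := hb heE hne hm
  have hfe : f ≠ e := fun h => hne (h ▸ hf)
  rcases G.pJ_total e.2 f e (hM'.1.1 hf) heE hf2 rfl hfe with h | h
  · exact ⟨f, hf, hf2, h⟩
  · exact absurd h hnp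

lemma not_blocks_push' (M : Finset (I × J)) (hM : IsStable G M) (e : I × J)
    (heE : e ∈ G.E) (hw : ∀ f ∈ M, f.2 = e.2 → G.pJ e.2 e f) :
    ∃ f ∈ M, f.1 = e.1 ∧ G.pI e.1 f e := by
  have hne : e ∉ M := fun he => G.pJ_irrefl e.2 e (hw e he rfl)
  have hb := hM.2 e
  unfold Blocks at hb
  push_neg at hb
  rcases Classical.em (∀ f ∈ M, f.1 = e.1 → G.pI e.1 e f) with hmc | hmc
  · obtain ⟨f, hf, hf2, hnp⟩ := hb heE hne hmc
    exact absurd (hw f hf hf2) hnp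
  · push_neg at hmc
    obtain ⟨f, hf, hf1, hnp⟩ := hmc
    have hfe : f ≠ e := fun h => hne (h ▸ hf)
    rcases G.pI_total e.1 f e (hM.1.1 hf) heE hf1 rfl hfe with h | h
    · exact ⟨f, hf, hf1, h⟩
    · exact absurd h hnp

end Helpers

lemma counting_main [Fintype I] [Fintype J] (G : PrefSystem I J)
    (M M' : Finset (I × J)) (hM : IsStable G M) (hM' : IsStable G M') :
    (∀ w : J, (∃ f ∈ M', f.2 = w ∧ ∀ g ∈ M, g.2 = w → G.pJ w f g) →
        ∃ e ∈ M, e.2 = w ∧ ∀ f ∈ M', f.1 = e.1 → G.pI e.1 e f) ∧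
    (∀ m : I, (∃ e ∈ M, e.1 = m ∧ ∀ f ∈ M', f.1 = m → G.pI m e f) →
        ∃ f ∈ M', f.1 = m) := by
  classical
  set A : Finset I := Finset.univ.filter
    (fun m : I => ∃ e ∈ M, e.1 = m ∧ ∀ f ∈ M', f.1 = m → G.pI m e f) with hAdef
  set B : Finset J := Finset.univ.filter
    (fun w : J => ∃ f ∈ M', f.2 = w ∧ ∀ g ∈ M, g.2 = w → G.pJ w f g) with hBdef
  have hAspec : ∀ x : {m // m ∈ A},
      ∃ e, e ∈ M ∧ e.1 = x.1 ∧ ∀ f ∈ M', f.1 = x.1 → G.pI x.1 e f := by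
    intro x
    have := (Finset.mem_filter.1 x.2).2
    obtain ⟨e, he, h1, h2⟩ := this
    exact ⟨e, he, h1, h2⟩
  have hBspec : ∀ y : {w // w ∈ B},
      ∃ f, f ∈ M' ∧ f.2 = y.1 ∧ ∀ g ∈ M, g.2 = y.1 → G.pJ y.1 f g := by
    intro y
    have := (Finset.mem_filter.1 y.2).2
    obtain ⟨f, hf, h1, h2⟩ := this
    exact ⟨f, hf, h1, h2⟩
  set EA : {m // m ∈ A} → I × J := fun x => (hAspec x).choose with hEA
  set EB : {w // w ∈ B} → I × J := fun y => (hBspec y).choose with hEB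
  have hEAspec : ∀ x, EA x ∈ M ∧ (EA x).1 = x.1 ∧
      ∀ f ∈ M', f.1 = x.1 → G.pI x.1 (EA x) f := fun x => (hAspec x).choose_spec
  have hEBspec : ∀ y, EB y ∈ M' ∧ (EB y).2 = y.1 ∧
      ∀ g ∈ M, g.2 = y.1 → G.pJ y.1 (EB y) g := fun y => (hBspec y).choose_spec
  -- the forward pushed edge: for x ∈ A, the woman (EA x).2 is in B
  have hFmem : ∀ x : {m // m ∈ A}, (EA x).2 ∈ B := by
    intro x
    obtain ⟨heM, he1, hpref⟩ := hEAspec x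
    have hm : ∀ f ∈ M', f.1 = (EA x).1 → G.pI (EA x).1 (EA x) f := by
      rw [he1]; exact hpref
    obtain ⟨f, hf, hf2, hpJ⟩ := not_blocks_push G M' hM' (EA x) (hM.1.1 heM) hm
    refine Finset.mem_filter.2 ⟨Finset.mem_univ _, f, hf, hf2, ?_⟩
    intro g hg hg2
    have hge : g = EA x := by
      by_contra hne
      exact (hM.1.2 g hg (EA x) heM hne).2 hg2
    rw [hge]; exact hpJ
  have hGmem : ∀ y : {w // w ∈ B}, (EB y).1 ∈ A := by
    intro y
    obtain ⟨hfM, hf2, hpref⟩ := hEBspec y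
    have hw : ∀ g ∈ M, g.2 = (EB y).2 → G.pJ (EB y).2 (EB y) g := by
      rw [hf2]; exact hpref
    obtain ⟨g, hg, hg1, hpI⟩ := not_blocks_push' G M hM (EB y) (hM'.1.1 hfM) hw
    refine Finset.mem_filter.2 ⟨Finset.mem_univ _, g, hg, hg1, ?_⟩
    intro f hf hf1
    have hfe : f = EB y := by
      by_contra hne
      exact (hM'.1.2 f hf (EB y) hfM hne).1 hf1
    rw [hfe]; exact hpI
  have hFinj : Function.Injective (fun x : {m // m ∈ A} => (EA x).2) := by
    intro x y hxy
    have hx := hEAspec x; have hy := hEAspec y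
    have heq : EA x = EA y := by
      by_contra hne
      exact (hM.1.2 _ hx.1 _ hy.1 hne).2 hxy
    exact Subtype.ext (hx.2.1.symm.trans (heq ▸ hy.2.1))
  have hGinj : Function.Injective (fun y : {w // w ∈ B} => (EB y).1) := by
    intro x y hxy
    have hx := hEBspec x; have hy := hEBspec y
    have heq : EB x = EB y := by
      by_contra hne
      exact (hM'.1.2 _ hx.1 _ hy.1 hne).1 hxy
    exact Subtype.ext (hx.2.1.symm.trans (heq ▸ hy.2.1))
  have hcard1 : A.card ≤ B.card := by
    calc A.card = (A.attach.image (fun x => (EA x).2)).card := by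
          rw [Finset.card_image_of_injective _ hFinj, Finset.card_attach]
      _ ≤ B.card := Finset.card_le_card (by
          intro w hw
          obtain ⟨x, _, rfl⟩ := Finset.mem_image.1 hw
          exact hFmem x)
  have hcard2 : B.card ≤ A.card := by
    calc B.card = (B.attach.image (fun y => (EB y).1)).card := by
          rw [Finset.card_image_of_injective _ hGinj, Finset.card_attach]
      _ ≤ A.card := Finset.card_le_card (by
          intro m hm
          obtain ⟨y, _, rfl⟩ := Finset.mem_image.1 hm
          exact hGmem y)
  have himgF : A.attach.image (fun x => (EA x).2) = B := by
    apply Finset.eq_of_subset_of_card_le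
    · intro w hw
      obtain ⟨x, _, rfl⟩ := Finset.mem_image.1 hw
      exact hFmem x
    · rw [Finset.card_image_of_injective _ hFinj, Finset.card_attach]
      exact hcard2
  have himgG : B.attach.image (fun y => (EB y).1) = A := by
    apply Finset.eq_of_subset_of_card_le
    · intro m hm
      obtain ⟨y, _, rfl⟩ := Finset.mem_image.1 hm
      exact hGmem y
    · rw [Finset.card_image_of_injective _ hGinj, Finset.card_attach]
      exact hcard1
  constructor
  · intro w hwB
    have hwB' : w ∈ B := Finset.mem_filter.2 ⟨Finset.mem_univ _, hwB⟩
    rw [← himgF] at hwB'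
    obtain ⟨x, _, hx⟩ := Finset.mem_image.1 hwB'
    obtain ⟨heM, he1, hpref⟩ := hEAspec x
    refine ⟨EA x, heM, hx, ?_⟩
    rw [he1]; exact hpref
  · intro m hmA
    have hmA' : m ∈ A := Finset.mem_filter.2 ⟨Finset.mem_univ _, hmA⟩
    rw [← himgG] at hmA'
    obtain ⟨y, _, hy⟩ := Finset.mem_image.1 hmA'
    exact ⟨EB y, (hEBspec y).1, hy⟩

lemma counting_main' [Fintype I] [Fintype J] (G : PrefSystem I J)
    (M M' : Finset (I × J)) (hM : IsStable G M) (hM' : IsStable G M') :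
    (∀ m : I, (∃ f ∈ M', f.1 = m ∧ ∀ g ∈ M, g.1 = m → G.pI m f g) →
        ∃ e ∈ M, e.1 = m ∧ ∀ f ∈ M', f.2 = e.2 → G.pJ e.2 e f) ∧
    (∀ w : J, (∃ e ∈ M, e.2 = w ∧ ∀ f ∈ M', f.2 = w → G.pJ w e f) →
        ∃ f ∈ M', f.2 = w) := by
  classical
  set A : Finset J := Finset.univ.filter
    (fun w : J => ∃ e ∈ M, e.2 = w ∧ ∀ f ∈ M', f.2 = w → G.pJ w e f) with hAdef
  set B : Finset I := Finset.univ.filter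
    (fun m : I => ∃ f ∈ M', f.1 = m ∧ ∀ g ∈ M, g.1 = m → G.pI m f g) with hBdef
  have hAspec : ∀ x : {w // w ∈ A},
      ∃ e, e ∈ M ∧ e.2 = x.1 ∧ ∀ f ∈ M', f.2 = x.1 → G.pJ x.1 e f := by
    intro x
    have := (Finset.mem_filter.1 x.2).2
    obtain ⟨e, he, h1, h2⟩ := this
    exact ⟨e, he, h1, h2⟩
  have hBspec : ∀ y : {m // m ∈ B},
      ∃ f, f ∈ M' ∧ f.1 = y.1 ∧ ∀ g ∈ M, g.1 = y.1 → G.pI y.1 f g := by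
    intro y
    have := (Finset.mem_filter.1 y.2).2
    obtain ⟨f, hf, h1, h2⟩ := this
    exact ⟨f, hf, h1, h2⟩
  set EA : {w // w ∈ A} → I × J := fun x => (hAspec x).choose with hEA
  set EB : {m // m ∈ B} → I × J := fun y => (hBspec y).choose with hEB
  have hEAspec : ∀ x, EA x ∈ M ∧ (EA x).2 = x.1 ∧
      ∀ f ∈ M', f.2 = x.1 → G.pJ x.1 (EA x) f := fun x => (hAspec x).choose_spec
  have hEBspec : ∀ y, EB y ∈ M' ∧ (EB y).1 = y.1 ∧
      ∀ g ∈ M, g.1 = y.1 → G.pI y.1 (EB y) g := fun y => (hBspec y).choose_spec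
  have hFmem : ∀ x : {w // w ∈ A}, (EA x).1 ∈ B := by
    intro x
    obtain ⟨heM, he2, hpref⟩ := hEAspec x
    have hw : ∀ f ∈ M', f.2 = (EA x).2 → G.pJ (EA x).2 (EA x) f := by
      rw [he2]; exact hpref
    obtain ⟨f, hf, hf1, hpI⟩ := not_blocks_push' G M' hM' (EA x) (hM.1.1 heM) hw
    refine Finset.mem_filter.2 ⟨Finset.mem_univ _, f, hf, hf1, ?_⟩
    intro g hg hg1
    have hge : g = EA x := by
      by_contra hne
      exact (hM.1.2 g hg (EA x) heM hne).1 hg1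
    rw [hge]; exact hpI
  have hGmem : ∀ y : {m // m ∈ B}, (EB y).2 ∈ A := by
    intro y
    obtain ⟨hfM, hf1, hpref⟩ := hEBspec y
    have hm : ∀ g ∈ M, g.1 = (EB y).1 → G.pI (EB y).1 (EB y) g := by
      rw [hf1]; exact hpref
    obtain ⟨g, hg, hg2, hpJ⟩ := not_blocks_push G M hM (EB y) (hM'.1.1 hfM) hm
    refine Finset.mem_filter.2 ⟨Finset.mem_univ _, g, hg, hg2, ?_⟩
    intro f hf hf2
    have hfe : f = EB y := by
      by_contra hne
      exact (hM'.1.2 f hf (EB y) hfM hne).2 hf2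
    rw [hfe]; exact hpJ
  have hFinj : Function.Injective (fun x : {w // w ∈ A} => (EA x).1) := by
    intro x y hxy
    have hx := hEAspec x; have hy := hEAspec y
    have heq : EA x = EA y := by
      by_contra hne
      exact (hM.1.2 _ hx.1 _ hy.1 hne).1 hxy
    exact Subtype.ext (hx.2.1.symm.trans (heq ▸ hy.2.1))
  have hGinj : Function.Injective (fun y : {m // m ∈ B} => (EB y).2) := by
    intro x y hxy
    have hx := hEBspec x; have hy := hEBspec y
    have heq : EB x = EB y := by
      by_contra hne
      exact (hM'.1.2 _ hx.1 _ hy.1 hne).2 hxy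
    exact Subtype.ext (hx.2.1.symm.trans (heq ▸ hy.2.1))
  have hcard1 : A.card ≤ B.card := by
    calc A.card = (A.attach.image (fun x => (EA x).1)).card := by
          rw [Finset.card_image_of_injective _ hFinj, Finset.card_attach]
      _ ≤ B.card := Finset.card_le_card (by
          intro m hm
          obtain ⟨x, _, rfl⟩ := Finset.mem_image.1 hm
          exact hFmem x)
  have hcard2 : B.card ≤ A.card := by
    calc B.card = (B.attach.image (fun y => (EB y).2)).card := by
          rw [Finset.card_image_of_injective _ hGinj, Finset.card_attach]
      _ ≤ A.card := Finset.card_le_card (by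
          intro w hw
          obtain ⟨y, _, rfl⟩ := Finset.mem_image.1 hw
          exact hGmem y)
  have himgF : A.attach.image (fun x => (EA x).1) = B := by
    apply Finset.eq_of_subset_of_card_le
    · intro m hm
      obtain ⟨x, _, rfl⟩ := Finset.mem_image.1 hm
      exact hFmem x
    · rw [Finset.card_image_of_injective _ hFinj, Finset.card_attach]
      exact hcard2
  have himgG : B.attach.image (fun y => (EB y).2) = A := by
    apply Finset.eq_of_subset_of_card_le
    · intro w hw
      obtain ⟨y, _, rfl⟩ := Finset.mem_image.1 hw
      exact hGmem y
    · rw [Finset.card_image_of_injective _ hGinj, Finset.card_attach]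
      exact hcard1
  constructor
  · intro m hmB
    have hmB' : m ∈ B := Finset.mem_filter.2 ⟨Finset.mem_univ _, hmB⟩
    rw [← himgF] at hmB'
    obtain ⟨x, _, hx⟩ := Finset.mem_image.1 hmB'
    obtain ⟨heM, he2, hpref⟩ := hEAspec x
    refine ⟨EA x, heM, hx, ?_⟩
    rw [he2]; exact hpref
  · intro w hwA
    have hwA' : w ∈ A := Finset.mem_filter.2 ⟨Finset.mem_univ _, hwA⟩
    rw [← himgG] at hwA'
    obtain ⟨y, _, hy⟩ := Finset.mem_image.1 hwA'
    exact ⟨EB y, (hEBspec y).1, hy⟩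

set_option linter.unusedSectionVars false
variable [Fintype I] [Fintype J] {G : PrefSystem I J} {ℓ : ℕ} {Ms : Fin ℓ → Finset (I × J)}

lemma edge_unique_at1 {M : Finset (I × J)} (hM : IsMatching G M) {e f : I × J}
    (he : e ∈ M) (hf : f ∈ M) (h : f.1 = e.1) : f = e := by
  by_contra hne
  exact (hM.2 f hf e he hne).1 h

lemma edge_unique_at2 {M : Finset (I × J)} (hM : IsMatching G M) {e f : I × J}
    (he : e ∈ M) (hf : f ∈ M) (h : f.2 = e.2) : f = e := by
  by_contra hne
  exact (hM.2 f hf e he hne).2 h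

lemma key_F1 (hst : ∀ i, IsStable G (Ms i)) (i j : Fin ℓ) (e : I × J) (he : e ∈ Ms j) :
    (∀ f ∈ Ms i, f.1 = e.1 → G.pI e.1 e f) ↔ (∃ f ∈ Ms i, f.2 = e.2 ∧ G.pJ e.2 f e) := by
  constructor
  · exact fun h => not_blocks_push G (Ms i) (hst i) e ((hst j).1.1 he) h
  · rintro ⟨f, hf, hf2, hpJ⟩
    have h := (counting_main G (Ms j) (Ms i) (hst j) (hst i)).1 e.2
      ⟨f, hf, hf2, fun g hg hg2 => by
        rw [edge_unique_at2 (hst j).1 he hg hg2]; exact hpJ⟩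
    obtain ⟨e', he', he'2, hpref⟩ := h
    rw [edge_unique_at2 (hst j).1 he he' he'2] at hpref
    exact hpref

lemma key_F2 (hst : ∀ i, IsStable G (Ms i)) (i j : Fin ℓ) (e : I × J) (he : e ∈ Ms j) :
    (∀ f ∈ Ms i, f.2 = e.2 → G.pJ e.2 e f) ↔ (∃ f ∈ Ms i, f.1 = e.1 ∧ G.pI e.1 f e) := by
  constructor
  · exact fun h => not_blocks_push' G (Ms i) (hst i) e ((hst j).1.1 he) h
  · rintro ⟨f, hf, hf1, hpI⟩
    have h := (counting_main' G (Ms j) (Ms i) (hst j) (hst i)).1 e.1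
      ⟨f, hf, hf1, fun g hg hg1 => by
        rw [edge_unique_at1 (hst j).1 he hg hg1]; exact hpI⟩
    obtain ⟨e', he', he'1, hpref⟩ := h
    rw [edge_unique_at1 (hst j).1 he he' he'1] at hpref
    exact hpref

lemma cover_I (hst : ∀ i, IsStable G (Ms i)) (i j : Fin ℓ) (m : I)
    (h : ∃ e ∈ Ms j, e.1 = m) : ∃ f ∈ Ms i, f.1 = m := by
  by_contra hn
  push_neg at hn
  obtain ⟨e, he, he1⟩ := h
  exact (by
    obtain ⟨f, hf, hf1⟩ := (counting_main G (Ms j) (Ms i) (hst j) (hst i)).2 m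
      ⟨e, he, he1, fun f hf h1 => absurd h1 (hn f hf)⟩
    exact hn f hf hf1)

lemma cover_J (hst : ∀ i, IsStable G (Ms i)) (i j : Fin ℓ) (w : J)
    (h : ∃ e ∈ Ms j, e.2 = w) : ∃ f ∈ Ms i, f.2 = w := by
  by_contra hn
  push_neg at hn
  obtain ⟨e, he, he2⟩ := h
  exact (by
    obtain ⟨f, hf, hf2⟩ := (counting_main' G (Ms j) (Ms i) (hst j) (hst i)).2 w
      ⟨e, he, he2, fun f hf h2 => absurd h2 (hn f hf)⟩
    exact hn f hf hf2)

lemma identity_I (hst : ∀ i, IsStable G (Ms i)) (e : I × J) (j : Fin ℓ) (he : e ∈ Ms j) :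
    countLeI G Ms e + countLtJ G Ms e = ℓ := by
  classical
  have hPQ : ∀ i : Fin ℓ,
      (∃ f ∈ Ms i, f.1 = e.1 ∧ (f = e ∨ G.pI e.1 f e)) ↔
      ¬ (∃ f ∈ Ms i, f.2 = e.2 ∧ f ≠ e ∧ G.pJ e.2 f e) := by
    intro i
    constructor
    · rintro ⟨f, hf, hf1, hor⟩ ⟨g, hg, hg2, _, hpJ⟩
      have hall := (key_F1 hst i j e he).2 ⟨g, hg, hg2, hpJ⟩
      have hpI := hall f hf hf1
      rcases hor with heq | h
      · rw [heq] at hpI; exact G.pI_irrefl e.1 e hpI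
      · exact G.pI_irrefl e.1 e (G.pI_trans e.1 e f e hpI h)
    · intro hQ
      by_contra hP
      push_neg at hP
      have hall : ∀ f ∈ Ms i, f.1 = e.1 → G.pI e.1 e f := by
        intro f hf hf1
        have h := hP f hf hf1
        have hfe : f ≠ e := h.1
        rcases G.pI_total e.1 f e ((hst i).1.1 hf) ((hst j).1.1 he) hf1 rfl hfe with hh | hh
        · exact absurd hh h.2
        · exact hh
      obtain ⟨f, hf, hf2, hpJ⟩ := (key_F1 hst i j e he).1 hall
      have hfe : f ≠ e := fun heq => G.pJ_irrefl e.2 e (heq ▸ hpJ)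
      exact hQ ⟨f, hf, hf2, hfe, hpJ⟩
  unfold countLeI countLtJ
  rw [Finset.filter_congr (fun i _ => hPQ i)]
  rw [Finset.filter_not, Finset.card_sdiff_of_subset (Finset.filter_subset _ _)]
  have hle : (Finset.univ.filter
      (fun i : Fin ℓ => ∃ f ∈ Ms i, f.2 = e.2 ∧ f ≠ e ∧ G.pJ e.2 f e)).card ≤ ℓ := by
    calc _ ≤ (Finset.univ : Finset (Fin ℓ)).card := Finset.card_filter_le _ _
      _ = ℓ := by simp
  simp only [Finset.card_univ, Fintype.card_fin]
  omega

lemma identity_J (hst : ∀ i, IsStable G (Ms i)) (e : I × J) (j : Fin ℓ) (he : e ∈ Ms j) :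
    countLeJ G Ms e + countLtI G Ms e = ℓ := by
  classical
  have hPQ : ∀ i : Fin ℓ,
      (∃ f ∈ Ms i, f.2 = e.2 ∧ (f = e ∨ G.pJ e.2 f e)) ↔
      ¬ (∃ f ∈ Ms i, f.1 = e.1 ∧ f ≠ e ∧ G.pI e.1 f e) := by
    intro i
    constructor
    · rintro ⟨f, hf, hf2, hor⟩ ⟨g, hg, hg1, _, hpI⟩
      have hall := (key_F2 hst i j e he).2 ⟨g, hg, hg1, hpI⟩
      have hpJ := hall f hf hf2
      rcases hor with heq | h
      · rw [heq] at hpJ; exact G.pJ_irrefl e.2 e hpJ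
      · exact G.pJ_irrefl e.2 e (G.pJ_trans e.2 e f e hpJ h)
    · intro hQ
      by_contra hP
      push_neg at hP
      have hall : ∀ f ∈ Ms i, f.2 = e.2 → G.pJ e.2 e f := by
        intro f hf hf2
        have h := hP f hf hf2
        have hfe : f ≠ e := h.1
        rcases G.pJ_total e.2 f e ((hst i).1.1 hf) ((hst j).1.1 he) hf2 rfl hfe with hh | hh
        · exact absurd hh h.2
        · exact hh
      obtain ⟨f, hf, hf1, hpI⟩ := (key_F2 hst i j e he).1 hall
      have hfe : f ≠ e := fun heq => G.pI_irrefl e.1 e (heq ▸ hpI)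
      exact hQ ⟨f, hf, hf1, hfe, hpI⟩
  unfold countLeJ countLtI
  rw [Finset.filter_congr (fun i _ => hPQ i)]
  rw [Finset.filter_not, Finset.card_sdiff_of_subset (Finset.filter_subset _ _)]
  have hle : (Finset.univ.filter
      (fun i : Fin ℓ => ∃ f ∈ Ms i, f.1 = e.1 ∧ f ≠ e ∧ G.pI e.1 f e)).card ≤ ℓ := by
    calc _ ≤ (Finset.univ : Finset (Fin ℓ)).card := Finset.card_filter_le _ _
      _ = ℓ := by simp
  simp only [Finset.card_univ, Fintype.card_fin]
  omega

lemma countLeI_le_countLtI {e f : I × J} (h1 : e.1 = f.1) (hp : G.pI f.1 e f) :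
    countLeI G Ms e ≤ countLtI G Ms f := by
  classical
  unfold countLeI countLtI
  apply Finset.card_le_card
  intro i hi
  obtain ⟨-, g, hg, hg1, hor⟩ := Finset.mem_filter.1 hi
  have hpg : G.pI f.1 g f := by
    rcases hor with heq | h
    · rw [heq]; exact hp
    · rw [h1] at h; exact G.pI_trans f.1 g e f h hp
  refine Finset.mem_filter.2 ⟨Finset.mem_univ _, g, hg, hg1.trans h1, ?_, hpg⟩
  intro heq
  rw [heq] at hpg
  exact G.pI_irrefl f.1 f hpg

lemma countLeJ_le_countLtJ {e f : I × J} (h2 : e.2 = f.2) (hp : G.pJ f.2 e f) :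
    countLeJ G Ms e ≤ countLtJ G Ms f := by
  classical
  unfold countLeJ countLtJ
  apply Finset.card_le_card
  intro i hi
  obtain ⟨-, g, hg, hg2, hor⟩ := Finset.mem_filter.1 hi
  have hpg : G.pJ f.2 g f := by
    rcases hor with heq | h
    · rw [heq]; exact hp
    · rw [h2] at h; exact G.pJ_trans f.2 g e f h hp
  refine Finset.mem_filter.2 ⟨Finset.mem_univ _, g, hg, hg2.trans h2, ?_, hpg⟩
  intro heq
  rw [heq] at hpg
  exact G.pJ_irrefl f.2 f hpg

lemma countLtI_lt_countLeI (hst : ∀ i, IsStable G (Ms i)) {e : I × J}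
    (he : ∃ i, e ∈ Ms i) : countLtI G Ms e < countLeI G Ms e := by
  classical
  obtain ⟨i₀, hi₀⟩ := he
  unfold countLtI countLeI
  apply Finset.card_lt_card
  have hsub : (Finset.univ.filter
        (fun i : Fin ℓ => ∃ f ∈ Ms i, f.1 = e.1 ∧ f ≠ e ∧ G.pI e.1 f e)) ⊆
      (Finset.univ.filter
        (fun i : Fin ℓ => ∃ f ∈ Ms i, f.1 = e.1 ∧ (f = e ∨ G.pI e.1 f e))) := by
    intro i hi
    obtain ⟨-, g, hg, hg1, -, hp⟩ := Finset.mem_filter.1 hi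
    exact Finset.mem_filter.2 ⟨Finset.mem_univ _, g, hg, hg1, Or.inr hp⟩
  refine (Finset.ssubset_iff_of_subset hsub).2 ⟨i₀, ?_, ?_⟩
  · exact Finset.mem_filter.2 ⟨Finset.mem_univ _, e, hi₀, rfl, Or.inl rfl⟩
  · intro hmem
    obtain ⟨-, g, hg, hg1, hne, -⟩ := Finset.mem_filter.1 hmem
    exact hne (edge_unique_at1 (hst i₀).1 hi₀ hg hg1)

lemma countLtJ_lt_countLeJ (hst : ∀ i, IsStable G (Ms i)) {e : I × J}
    (he : ∃ i, e ∈ Ms i) : countLtJ G Ms e < countLeJ G Ms e := by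
  classical
  obtain ⟨i₀, hi₀⟩ := he
  unfold countLtJ countLeJ
  apply Finset.card_lt_card
  have hsub : (Finset.univ.filter
        (fun i : Fin ℓ => ∃ f ∈ Ms i, f.2 = e.2 ∧ f ≠ e ∧ G.pJ e.2 f e)) ⊆
      (Finset.univ.filter
        (fun i : Fin ℓ => ∃ f ∈ Ms i, f.2 = e.2 ∧ (f = e ∨ G.pJ e.2 f e))) := by
    intro i hi
    obtain ⟨-, g, hg, hg2, -, hp⟩ := Finset.mem_filter.1 hi
    exact Finset.mem_filter.2 ⟨Finset.mem_univ _, g, hg, hg2, Or.inr hp⟩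
  refine (Finset.ssubset_iff_of_subset hsub).2 ⟨i₀, ?_, ?_⟩
  · exact Finset.mem_filter.2 ⟨Finset.mem_univ _, e, hi₀, rfl, Or.inl rfl⟩
  · intro hmem
    obtain ⟨-, g, hg, hg2, hne, -⟩ := Finset.mem_filter.1 hmem
    exact hne (edge_unique_at2 (hst i₀).1 hi₀ hg hg2)

lemma exists_kth_I (hst : ∀ i, IsStable G (Ms i)) (k : ℕ) (hk1 : 1 ≤ k) (hkl : k ≤ ℓ)
    (m : I) (hcov : ∃ i, ∃ e ∈ Ms i, e.1 = m) :
    ∃ e, IsKthI G Ms k e ∧ e.1 = m := by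
  classical
  set S : Finset (I × J) := G.E.filter (fun e => e.1 = m ∧ ∃ i, e ∈ Ms i) with hSdef
  have hSmem : ∀ e, e ∈ S ↔ (e ∈ G.E ∧ e.1 = m ∧ ∃ i, e ∈ Ms i) := by
    intro e; simp [hSdef]
  have hS : ∀ i : Fin ℓ, ∃ e ∈ S, e ∈ Ms i := by
    intro i
    obtain ⟨j, hj⟩ := hcov
    obtain ⟨f, hf, hf1⟩ := cover_I hst i j m hj
    exact ⟨f, (hSmem f).2 ⟨(hst i).1.1 hf, hf1, i, hf⟩, hf⟩
  have hmono : ∀ e ∈ S, ∀ e' ∈ S, G.pI m e' e →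
      countLeI G Ms e' < countLeI G Ms e := by
    intro e heS e' he'S hp
    obtain ⟨-, he1, hei⟩ := (hSmem e).1 heS
    obtain ⟨-, he'1, -⟩ := (hSmem e').1 he'S
    have h1 : countLeI G Ms e' ≤ countLtI G Ms e :=
      countLeI_le_countLtI (he'1.trans he1.symm) (by rw [he1]; exact hp)
    exact lt_of_le_of_lt h1 (countLtI_lt_countLeI hst hei)
  have hSne : S.Nonempty := by
    obtain ⟨e, he, -⟩ := hS ⟨0, by omega⟩
    exact ⟨e, he⟩
  obtain ⟨e₀, he₀S, he₀max⟩ := Finset.exists_max_image S (countLeI G Ms) hSne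
  have he₀1 : e₀.1 = m := ((hSmem e₀).1 he₀S).2.1
  have htop : k ≤ countLeI G Ms e₀ := by
    have hsub : (Finset.univ : Finset (Fin ℓ)) ⊆ Finset.univ.filter
        (fun i : Fin ℓ => ∃ f ∈ Ms i, f.1 = e₀.1 ∧ (f = e₀ ∨ G.pI e₀.1 f e₀)) := by
      intro i _
      obtain ⟨f, hfS, hfi⟩ := hS i
      obtain ⟨hfE, hf1, -⟩ := (hSmem f).1 hfS
      refine Finset.mem_filter.2 ⟨Finset.mem_univ _, f, hfi, hf1.trans he₀1.symm, ?_⟩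
      by_cases hfe : f = e₀
      · exact Or.inl hfe
      · rcases G.pI_total m f e₀ hfE (((hSmem e₀).1 he₀S).1) hf1 he₀1 hfe with hh | hh
        · rw [he₀1]; exact Or.inr hh
        · exact absurd (he₀max f hfS) (not_le.2 (hmono f hfS e₀ he₀S hh))
    have : ℓ ≤ countLeI G Ms e₀ := by
      unfold countLeI
      calc ℓ = (Finset.univ : Finset (Fin ℓ)).card := by simp
        _ ≤ _ := Finset.card_le_card hsub
    omega
  set T : Finset (I × J) := S.filter (fun e => k ≤ countLeI G Ms e) with hTdef
  have hTne : T.Nonempty := ⟨e₀, Finset.mem_filter.2 ⟨he₀S, htop⟩⟩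
  obtain ⟨es, hesT, hesmin⟩ := Finset.exists_min_image T (countLeI G Ms) hTne
  have hesS : es ∈ S := (Finset.mem_filter.1 hesT).1
  have heskle : k ≤ countLeI G Ms es := (Finset.mem_filter.1 hesT).2
  obtain ⟨hesE, hes1, hesi⟩ := (hSmem es).1 hesS
  refine ⟨es, ⟨hesi, ?_, heskle⟩, hes1⟩
  by_contra hcon
  push_neg at hcon
  set V : Finset (I × J) := S.filter (fun f => f ≠ es ∧ G.pI m f es) with hVdef
  have hVne : V.Nonempty := by
    have hpos : 0 < countLtI G Ms es := by omega
    unfold countLtI at hpos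
    obtain ⟨i, hi⟩ := Finset.card_pos.1 hpos
    obtain ⟨-, f, hf, hf1, hne, hp⟩ := Finset.mem_filter.1 hi
    refine ⟨f, Finset.mem_filter.2 ⟨(hSmem f).2 ⟨(hst i).1.1 hf, hf1.trans hes1, i, hf⟩,
      hne, ?_⟩⟩
    rw [← hes1]; exact hp
  obtain ⟨e', he'V, he'max⟩ := Finset.exists_max_image V (countLeI G Ms) hVne
  have he'S : e' ∈ S := (Finset.mem_filter.1 he'V).1
  obtain ⟨he'ne, he'p⟩ := (Finset.mem_filter.1 he'V).2
  obtain ⟨he'E, he'1, -⟩ := (hSmem e').1 he'S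
  have hclaim : countLtI G Ms es ≤ countLeI G Ms e' := by
    unfold countLtI countLeI
    apply Finset.card_le_card
    intro i hi
    obtain ⟨-, f, hf, hf1, hne, hp⟩ := Finset.mem_filter.1 hi
    have hfS : f ∈ S := (hSmem f).2 ⟨(hst i).1.1 hf, hf1.trans hes1, i, hf⟩
    have hfV : f ∈ V := Finset.mem_filter.2 ⟨hfS, hne, by rw [← hes1]; exact hp⟩
    refine Finset.mem_filter.2 ⟨Finset.mem_univ _, f, hf, (hf1.trans hes1).trans he'1.symm, ?_⟩
    by_cases hfe : f = e'
    · exact Or.inl hfe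
    · rcases G.pI_total m f e' ((hst i).1.1 hf) he'E (hf1.trans hes1) he'1 hfe with hh | hh
      · rw [he'1]; exact Or.inr hh
      · exact absurd (he'max f hfV) (not_le.2 (hmono f hfS e' he'S hh))
  have he'T : e' ∈ T := Finset.mem_filter.2 ⟨he'S, by omega⟩
  have h1 := hesmin e' he'T
  have h2 := hmono es hesS e' he'S he'p
  omega

lemma exists_kth_J (hst : ∀ i, IsStable G (Ms i)) (k : ℕ) (hk1 : 1 ≤ k) (hkl : k ≤ ℓ)
    (w : J) (hcov : ∃ i, ∃ e ∈ Ms i, e.2 = w) :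
    ∃ e, IsKthJ G Ms k e ∧ e.2 = w := by
  classical
  set S : Finset (I × J) := G.E.filter (fun e => e.2 = w ∧ ∃ i, e ∈ Ms i) with hSdef
  have hSmem : ∀ e, e ∈ S ↔ (e ∈ G.E ∧ e.2 = w ∧ ∃ i, e ∈ Ms i) := by
    intro e; simp [hSdef]
  have hS : ∀ i : Fin ℓ, ∃ e ∈ S, e ∈ Ms i := by
    intro i
    obtain ⟨j, hj⟩ := hcov
    obtain ⟨f, hf, hf2⟩ := cover_J hst i j w hj
    exact ⟨f, (hSmem f).2 ⟨(hst i).1.1 hf, hf2, i, hf⟩, hf⟩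
  have hmono : ∀ e ∈ S, ∀ e' ∈ S, G.pJ w e' e →
      countLeJ G Ms e' < countLeJ G Ms e := by
    intro e heS e' he'S hp
    obtain ⟨-, he2, hei⟩ := (hSmem e).1 heS
    obtain ⟨-, he'2, -⟩ := (hSmem e').1 he'S
    have h1 : countLeJ G Ms e' ≤ countLtJ G Ms e :=
      countLeJ_le_countLtJ (he'2.trans he2.symm) (by rw [he2]; exact hp)
    exact lt_of_le_of_lt h1 (countLtJ_lt_countLeJ hst hei)
  have hSne : S.Nonempty := by
    obtain ⟨e, he, -⟩ := hS ⟨0, by omega⟩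
    exact ⟨e, he⟩
  obtain ⟨e₀, he₀S, he₀max⟩ := Finset.exists_max_image S (countLeJ G Ms) hSne
  have he₀2 : e₀.2 = w := ((hSmem e₀).1 he₀S).2.1
  have htop : k ≤ countLeJ G Ms e₀ := by
    have hsub : (Finset.univ : Finset (Fin ℓ)) ⊆ Finset.univ.filter
        (fun i : Fin ℓ => ∃ f ∈ Ms i, f.2 = e₀.2 ∧ (f = e₀ ∨ G.pJ e₀.2 f e₀)) := by
      intro i _
      obtain ⟨f, hfS, hfi⟩ := hS i
      obtain ⟨hfE, hf2, -⟩ := (hSmem f).1 hfS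
      refine Finset.mem_filter.2 ⟨Finset.mem_univ _, f, hfi, hf2.trans he₀2.symm, ?_⟩
      by_cases hfe : f = e₀
      · exact Or.inl hfe
      · rcases G.pJ_total w f e₀ hfE (((hSmem e₀).1 he₀S).1) hf2 he₀2 hfe with hh | hh
        · rw [he₀2]; exact Or.inr hh
        · exact absurd (he₀max f hfS) (not_le.2 (hmono f hfS e₀ he₀S hh))
    have : ℓ ≤ countLeJ G Ms e₀ := by
      unfold countLeJ
      calc ℓ = (Finset.univ : Finset (Fin ℓ)).card := by simp
        _ ≤ _ := Finset.card_le_card hsub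
    omega
  set T : Finset (I × J) := S.filter (fun e => k ≤ countLeJ G Ms e) with hTdef
  have hTne : T.Nonempty := ⟨e₀, Finset.mem_filter.2 ⟨he₀S, htop⟩⟩
  obtain ⟨es, hesT, hesmin⟩ := Finset.exists_min_image T (countLeJ G Ms) hTne
  have hesS : es ∈ S := (Finset.mem_filter.1 hesT).1
  have heskle : k ≤ countLeJ G Ms es := (Finset.mem_filter.1 hesT).2
  obtain ⟨hesE, hes2, hesi⟩ := (hSmem es).1 hesS
  refine ⟨es, ⟨hesi, ?_, heskle⟩, hes2⟩
  by_contra hcon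
  push_neg at hcon
  set V : Finset (I × J) := S.filter (fun f => f ≠ es ∧ G.pJ w f es) with hVdef
  have hVne : V.Nonempty := by
    have hpos : 0 < countLtJ G Ms es := by omega
    unfold countLtJ at hpos
    obtain ⟨i, hi⟩ := Finset.card_pos.1 hpos
    obtain ⟨-, f, hf, hf2, hne, hp⟩ := Finset.mem_filter.1 hi
    refine ⟨f, Finset.mem_filter.2 ⟨(hSmem f).2 ⟨(hst i).1.1 hf, hf2.trans hes2, i, hf⟩,
      hne, ?_⟩⟩
    rw [← hes2]; exact hp
  obtain ⟨e', he'V, he'max⟩ := Finset.exists_max_image V (countLeJ G Ms) hVne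
  have he'S : e' ∈ S := (Finset.mem_filter.1 he'V).1
  obtain ⟨he'ne, he'p⟩ := (Finset.mem_filter.1 he'V).2
  obtain ⟨he'E, he'2, -⟩ := (hSmem e').1 he'S
  have hclaim : countLtJ G Ms es ≤ countLeJ G Ms e' := by
    unfold countLtJ countLeJ
    apply Finset.card_le_card
    intro i hi
    obtain ⟨-, f, hf, hf2, hne, hp⟩ := Finset.mem_filter.1 hi
    have hfS : f ∈ S := (hSmem f).2 ⟨(hst i).1.1 hf, hf2.trans hes2, i, hf⟩
    have hfV : f ∈ V := Finset.mem_filter.2 ⟨hfS, hne, by rw [← hes2]; exact hp⟩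
    refine Finset.mem_filter.2 ⟨Finset.mem_univ _, f, hf, (hf2.trans hes2).trans he'2.symm, ?_⟩
    by_cases hfe : f = e'
    · exact Or.inl hfe
    · rcases G.pJ_total w f e' ((hst i).1.1 hf) he'E (hf2.trans hes2) he'2 hfe with hh | hh
      · rw [he'2]; exact Or.inr hh
      · exact absurd (he'max f hfV) (not_le.2 (hmono f hfS e' he'S hh))
  have he'T : e' ∈ T := Finset.mem_filter.2 ⟨he'S, by omega⟩
  have h1 := hesmin e' he'T
  have h2 := hmono es hesS e' he'S he'p
  omega

/-- for stable matchings `M₁, …, M_ℓ` and `1 ≤ k ≤ ℓ`, the set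
`A(k)` of `k`-th choices at the `I`-side equals the set `B(ℓ − k + 1)` of
`(ℓ−k+1)`-th choices at the `J`-side, and it is a stable matching. -/
theorem generalized_median_stable {I J : Type} [Fintype I] [Fintype J]
    [DecidableEq I] [DecidableEq J] (G : PrefSystem I J)
    (ℓ k : ℕ) (hk1 : 1 ≤ k) (hkℓ : k ≤ ℓ)
    (Ms : Fin ℓ → Finset (I × J)) (hst : ∀ i, IsStable G (Ms i))
    (M' : Finset (I × J)) (hM' : ∀ e : I × J, e ∈ M' ↔ IsKthI G Ms k e) :
    (∀ e : I × J, IsKthI G Ms k e ↔ IsKthJ G Ms (ℓ - k + 1) e) ∧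
    IsStable G M' := by
  classical
  have part1 : ∀ e : I × J, IsKthI G Ms k e ↔ IsKthJ G Ms (ℓ - k + 1) e := by
    intro e
    constructor
    · rintro ⟨⟨i, hi⟩, hb, ha⟩
      have id1 := identity_I hst e i hi
      have id2 := identity_J hst e i hi
      exact ⟨⟨i, hi⟩, by omega, by omega⟩
    · rintro ⟨⟨i, hi⟩, hd, hc⟩
      have id1 := identity_I hst e i hi
      have id2 := identity_J hst e i hi
      exact ⟨⟨i, hi⟩, by omega, by omega⟩
  refine ⟨part1, ⟨⟨?_, ?_⟩, ?_⟩⟩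
  · intro e he
    obtain ⟨⟨i, hi⟩, -, -⟩ := (hM' e).1 he
    exact (hst i).1.1 hi
  · intro e he f hf hne
    obtain ⟨⟨i, hi⟩, hbe, hae⟩ := (hM' e).1 he
    obtain ⟨⟨i', hi'⟩, hbf, haf⟩ := (hM' f).1 hf
    have heE : e ∈ G.E := (hst i).1.1 hi
    have hfE : f ∈ G.E := (hst i').1.1 hi'
    constructor
    · intro h1
      rcases G.pI_total f.1 e f heE hfE h1 rfl hne with hh | hh
      · have := countLeI_le_countLtI (Ms := Ms) h1 hh
        omega
      · have := countLeI_le_countLtI (Ms := Ms) h1.symm (by rw [h1]; exact hh)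
        omega
    · intro h2
      obtain ⟨-, hde, hce⟩ := (part1 e).1 ((hM' e).1 he)
      obtain ⟨-, hdf, hcf⟩ := (part1 f).1 ((hM' f).1 hf)
      rcases G.pJ_total f.2 e f heE hfE h2 rfl hne with hh | hh
      · have := countLeJ_le_countLtJ (Ms := Ms) h2 hh
        omega
      · have := countLeJ_le_countLtJ (Ms := Ms) h2.symm (by rw [h2]; exact hh)
        omega
  · intro e hbl
    obtain ⟨heE, heM', hmI, hmJ⟩ := hbl
    have hI : countLeI G Ms e < k := by
      by_cases hg : ∃ g ∈ M', g.1 = e.1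
      · obtain ⟨g, hgM, hg1⟩ := hg
        obtain ⟨⟨i, hi⟩, hbg, hag⟩ := (hM' g).1 hgM
        have hpe : G.pI e.1 e g := hmI g hgM hg1
        have := countLeI_le_countLtI (Ms := Ms) hg1.symm (by rw [hg1]; exact hpe)
        omega
      · push_neg at hg
        have h0 : countLeI G Ms e = 0 := by
          by_contra h
          have hpos : 0 < countLeI G Ms e := Nat.pos_of_ne_zero h
          unfold countLeI at hpos
          obtain ⟨i, hii⟩ := Finset.card_pos.1 hpos
          simp only [Finset.mem_filter] at hii
          obtain ⟨-, f, hf, hf1, -⟩ := hii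
          obtain ⟨e', he'k, he'1⟩ := exists_kth_I hst k hk1 hkℓ e.1 ⟨i, f, hf, hf1⟩
          exact hg e' ((hM' e').2 he'k) he'1
        omega
    have hJ : countLeJ G Ms e ≤ ℓ - k := by
      by_cases hg : ∃ g ∈ M', g.2 = e.2
      · obtain ⟨g, hgM, hg2⟩ := hg
        obtain ⟨-, hdg, hcg⟩ := (part1 g).1 ((hM' g).1 hgM)
        have hpe : G.pJ e.2 e g := hmJ g hgM hg2
        have := countLeJ_le_countLtJ (Ms := Ms) hg2.symm (by rw [hg2]; exact hpe)
        omega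
      · push_neg at hg
        have h0 : countLeJ G Ms e = 0 := by
          by_contra h
          have hpos : 0 < countLeJ G Ms e := Nat.pos_of_ne_zero h
          unfold countLeJ at hpos
          obtain ⟨i, hii⟩ := Finset.card_pos.1 hpos
          simp only [Finset.mem_filter] at hii
          obtain ⟨-, f, hf, hf2, -⟩ := hii
          obtain ⟨e', he'k, he'2⟩ := exists_kth_J hst (ℓ - k + 1) (by omega) (by omega)
            e.2 ⟨i, f, hf, hf2⟩
          exact hg e' ((hM' e').2 ((part1 e').2 he'k)) he'2
        omega
    have hsum : ℓ ≤ countLeI G Ms e + countLeJ G Ms e := by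
      have hdisj : ∀ i : Fin ℓ,
          (∃ f ∈ Ms i, f.1 = e.1 ∧ (f = e ∨ G.pI e.1 f e)) ∨
          (∃ f ∈ Ms i, f.2 = e.2 ∧ (f = e ∨ G.pJ e.2 f e)) := by
        intro i
        have hnb := (hst i).2 e
        unfold Blocks at hnb
        push_neg at hnb
        by_cases hei : e ∈ Ms i
        · exact Or.inl ⟨e, hei, rfl, Or.inl rfl⟩
        by_cases hmc : ∀ f ∈ Ms i, f.1 = e.1 → G.pI e.1 e f
        · obtain ⟨f, hf, hf2, hnp⟩ := hnb heE hei hmc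
          have hfe : f ≠ e := fun h => hei (h ▸ hf)
          rcases G.pJ_total e.2 f e ((hst i).1.1 hf) heE hf2 rfl hfe with hh | hh
          · exact Or.inr ⟨f, hf, hf2, Or.inr hh⟩
          · exact absurd hh hnp
        · push_neg at hmc
          obtain ⟨f, hf, hf1, hnp⟩ := hmc
          have hfe : f ≠ e := fun h => hei (h ▸ hf)
          rcases G.pI_total e.1 f e ((hst i).1.1 hf) heE hf1 rfl hfe with hh | hh
          · exact Or.inl ⟨f, hf, hf1, Or.inr hh⟩
          · exact absurd hh hnp
      unfold countLeI countLeJ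
      refine le_trans ?_ (Finset.card_union_le _ _)
      refine le_trans (le_of_eq ?_) (Finset.card_le_card (s := (Finset.univ : Finset (Fin ℓ))) ?_)
      · simp
      · intro i _
        simp only [Finset.mem_union, Finset.mem_filter, Finset.mem_univ, true_and]
        exact hdisj i
    omega
end
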